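/- arXiv:2510.06609 — 3 statements merged into one kernel-verified Lean document; each statement's English description precedes it below -/
import Mathlib

section
/- Fix a finite ground set E, a flag 𝓕 : F_1 ⊊ F_2 ⊊ ⋯ ⊊ F_k of subsets of E, and a subset I ⊆ {1,…,|E|−1}. Define N̂_{𝓕,I} on loopless matroids M on E by: N̂_{𝓕,I}(M) = the number of flags 𝓖 : G_1 ⊊ ⋯ ⊊ G_m of nonempty proper flats of M with rank set exactly I, disjoint from 𝓕, such that the union 𝓖 ⊔ 𝓕 is again a flag of flats of M, provided that every F_i is a flat of M; and N̂_{𝓕,I}(M) = 0 if some F_i is not a flat of M. Then N̂_{𝓕,I} is a valuative function on loopless matroids on E. -/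
open scoped Classical
open MvPolynomial

namespace ChowPaper

variable {α : Type*}

/-- A matroid is loopless if every element of the ground set is independent as a singleton. -/
def Loopless (M : Matroid α) : Prop := ∀ a ∈ M.E, M.Indep ({a} : Set α)

/-- The (natural-number) rank of a set in a matroid: the supremum of the cardinalities of
independent subsets. -/
noncomputable def rkN (M : Matroid α) (X : Set α) : ℕ :=
  sSup {n : ℕ | ∃ I, M.Indep I ∧ I ⊆ X ∧ I.ncard = n}

/-- Nonempty proper flats of a matroid. -/
def PFlat (M : Matroid α) (F : Set α) : Prop := M.IsFlat F ∧ F.Nonempty ∧ F ≠ M.E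

/-- The index type of variables of the Chow ring: nonempty proper flats. -/
def FlatIdx (M : Matroid α) := {F : Set α // PFlat M F}

variable (R : Type*) [CommRing R]

/-- The polynomial ring `R[x_F : F a nonempty proper flat]`. -/
abbrev Pre (M : Matroid α) := MvPolynomial (FlatIdx M) R

/-- The linear form `∑_{F ∋ i} x_F`. -/
noncomputable def alphaPre (M : Matroid α) (i : α) : Pre R M :=
  ∑ᶠ F : FlatIdx M, if i ∈ F.1 then X F else 0

/-- The linear form `∑_{F ∌ i} x_F`. -/
noncomputable def betaPre (M : Matroid α) (i : α) : Pre R M :=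
  ∑ᶠ F : FlatIdx M, if i ∉ F.1 then X F else 0

/-- The defining ideal of the Chow ring of a matroid:  generated by products `x_F x_G` for
incomparable flats, and the differences `(∑_{F ∋ i} x_F) - (∑_{F ∋ j} x_F)` for `i j` in the
ground set. -/
noncomputable def chowIdeal (M : Matroid α) : Ideal (Pre R M) :=
  Ideal.span ({p | ∃ F G : FlatIdx M, ¬ F.1 ⊆ G.1 ∧ ¬ G.1 ⊆ F.1 ∧ p = X F * X G} ∪
    {p | ∃ i ∈ M.E, ∃ j ∈ M.E, p = alphaPre R M i - alphaPre R M j})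

/-- The Chow ring of a matroid. -/
abbrev Chow (M : Matroid α) := Pre R M ⧸ chowIdeal R M

/-- The quotient map onto the Chow ring. -/
noncomputable def cmk (M : Matroid α) : Pre R M →+* Chow R M :=
  Ideal.Quotient.mk (chowIdeal R M)

/-- The class `x_F` of a nonempty proper flat in the Chow ring. -/
noncomputable def xcls (M : Matroid α) (F : FlatIdx M) : Chow R M := cmk R M (X F)

/-- The class `x_F` for any set, with the convention that `x_F = 1` when `F` is not a nonempty
proper flat (in particular `x_∅ = x_E = 1`). -/
noncomputable def xv (M : Matroid α) (F : Set α) : Chow R M :=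
  if h : PFlat M F then xcls R M ⟨F, h⟩ else 1

/-- The class `α = ∑_{F ∋ i} x_F` in the Chow ring. -/
noncomputable def alpha (M : Matroid α) (i : α) : Chow R M := cmk R M (alphaPre R M i)

/-- The class `β = ∑_{F ∌ i} x_F` in the Chow ring. -/
noncomputable def beta (M : Matroid α) (i : α) : Chow R M := cmk R M (betaPre R M i)

/-- The class `α_S = α - ∑_{S ⊆ F} x_F`. -/
noncomputable def alphaS (M : Matroid α) (i : α) (S : Set α) : Chow R M :=
  alpha R M i - cmk R M (∑ᶠ F : FlatIdx M, if S ⊆ F.1 then X F else 0)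

/-- The class `β_S = β - ∑_{F ⊆ E \ S} x_F`. -/
noncomputable def betaS (M : Matroid α) (i : α) (S : Set α) : Chow R M :=
  beta R M i - cmk R M (∑ᶠ F : FlatIdx M, if F.1 ⊆ M.E \ S then X F else 0)

/-- The sum of the classes of all flats of a given rank `n`. -/
noncomputable def flatsOfRank (M : Matroid α) (n : ℕ) : Chow R M :=
  cmk R M (∑ᶠ F : FlatIdx M, if rkN M F.1 = n then X F else 0)

/-- The degree-1 class with coefficients `c`, i.e. `∑_F c_F x_F`. -/
noncomputable def lin (M : Matroid α) (c : FlatIdx M → R) : Chow R M :=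
  cmk R M (∑ᶠ F : FlatIdx M, MvPolynomial.C (c F) * X F)

/-- `deg` is a degree map for a rank-`r` matroid if it is linear and sends the monomial of every
complete flag `F_1 ⊊ ⋯ ⊊ F_{r-1}` of nonempty proper flats to `1`.  (By Adiprasito–Huh–Katz such
a map exists and its values on the degree-`(r-1)` part of the Chow ring are uniquely
determined.) -/
def IsDegMap (M : Matroid α) (r : ℕ) (deg : Chow R M →ₗ[R] R) : Prop :=
  ∀ G : Fin (r - 1) → FlatIdx M, (StrictMono fun t => (G t).1) →
    deg (cmk R M (∏ t, X (G t))) = 1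

/-- A finite set of subsets is a flag of (nonempty proper) flats if all members are nonempty
proper flats and they are pairwise comparable. -/
def IsFlagF (M : Matroid α) (S : Finset (Set α)) : Prop :=
  (∀ F ∈ S, PFlat M F) ∧ ∀ F ∈ S, ∀ G ∈ S, F ⊆ G ∨ G ⊆ F

/-- A finite set of nonempty proper flats is a flag if its members are pairwise comparable. -/
def IsFlagIdx (M : Matroid α) (S : Finset (FlatIdx M)) : Prop :=
  ∀ F ∈ S, ∀ G ∈ S, F.1 ⊆ G.1 ∨ G.1 ⊆ F.1

/-- `N_I`: the number of flags of nonempty proper flats whose set of ranks is exactly `I`. -/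
noncomputable def Ncount (M : Matroid α) (I : Finset ℕ) : ℕ :=
  {S : Finset (Set α) | IsFlagF M S ∧ S.image (rkN M) = I}.ncard

/-- `N_{I,s}`: the number of flags of nonempty proper flats with rank set `I` none of whose
members contains `s` (equivalently, whose maximal member does not contain `s`). -/
noncomputable def NcountS (M : Matroid α) (I : Finset ℕ) (s : α) : ℕ :=
  {S : Finset (Set α) | IsFlagF M S ∧ S.image (rkN M) = I ∧ ∀ F ∈ S, s ∉ F}.ncard

/-- Combinatorial nefness (property (P3)): for every flag there is a representation with
coefficients vanishing on the flag and nonnegative on every flat that can be inserted into the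
flag. -/
def CombNef (M : Matroid α) (ℓ : Chow ℝ M) : Prop :=
  ∀ S : Finset (FlatIdx M), IsFlagIdx M S →
    ∃ c : FlatIdx M → ℝ, ℓ = lin ℝ M c ∧ (∀ F ∈ S, c F = 0) ∧
      ∀ F : FlatIdx M, F ∉ S → (∀ G ∈ S, F.1 ⊆ G.1 ∨ G.1 ⊆ F.1) → 0 ≤ c F

/-- Combinatorial ampleness: as nefness, with strictly positive coefficients on insertable
flats. -/
def CombAmple (M : Matroid α) (ℓ : Chow ℝ M) : Prop :=
  ∀ S : Finset (FlatIdx M), IsFlagIdx M S →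
    ∃ c : FlatIdx M → ℝ, ℓ = lin ℝ M c ∧ (∀ F ∈ S, c F = 0) ∧
      ∀ F : FlatIdx M, F ∉ S → (∀ G ∈ S, F.1 ⊆ G.1 ∨ G.1 ⊆ F.1) → 0 < c F

/-- Property (P2): for every flag there is a representation with coefficients vanishing on the
flag and nonnegative on all nonempty proper flats. -/
def P2 (M : Matroid α) (ℓ : Chow ℝ M) : Prop :=
  ∀ S : Finset (FlatIdx M), IsFlagIdx M S →
    ∃ c : FlatIdx M → ℝ, ℓ = lin ℝ M c ∧ (∀ F ∈ S, c F = 0) ∧ ∀ F : FlatIdx M, 0 ≤ c F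

/-- The fake effective cone: classes with nonnegative degree against every product of `r - 2`
combinatorially nef classes. -/
noncomputable def FakeEff (M : Matroid α) (r : ℕ) (deg : Chow ℝ M →ₗ[ℝ] ℝ) : Set (Chow ℝ M) :=
  {D | ∀ L : Fin (r - 2) → Chow ℝ M, (∀ t, CombNef M (L t)) → 0 ≤ deg (D * ∏ t, L t)}

/-- The matroid base polytope, as a subset of `α → ℝ`: the convex hull of the indicator
vectors of the bases. -/
noncomputable def polytope (M : Matroid α) : Set (α → ℝ) :=
  convexHull ℝ {x | ∃ B, M.IsBase B ∧ x = B.indicator 1}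

/-- The flag-counting function `N̂_{𝓕,I}` of Theorem 6.2: the number of flags of nonempty proper
flats with rank set `I`, disjoint from `𝓕` and forming a flag of flats together with `𝓕`,
provided every member of `𝓕` is a flat; and `0` otherwise. -/
noncomputable def Nhat (M : Matroid α) (Fl : Finset (Set α)) (I : Finset ℕ) : ℤ :=
  if ∀ F ∈ Fl, M.IsFlat F then
    ({G : Finset (Set α) | IsFlagF M G ∧ G.image (rkN M) = I ∧ Disjoint G Fl ∧
      IsFlagF M (G ∪ Fl)}).ncard
  else 0


section RankLemmas

variable {M : Matroid α} {X Y T J : Set α}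

lemma rkN_bddAbove (hE : M.E.Finite) (X : Set α) :
    BddAbove {n : ℕ | ∃ I, M.Indep I ∧ I ⊆ X ∧ I.ncard = n} := by
  refine ⟨M.E.ncard, ?_⟩
  rintro n ⟨I, hI, -, rfl⟩
  exact Set.ncard_le_ncard hI.subset_ground hE

lemma le_rkN (hE : M.E.Finite) {I : Set α} (hI : M.Indep I) (hIX : I ⊆ X) :
    I.ncard ≤ rkN M X :=
  le_csSup (rkN_bddAbove hE X) ⟨I, hI, hIX, rfl⟩

lemma rkN_le (n : ℕ) (h : ∀ I, M.Indep I → I ⊆ X → I.ncard ≤ n) : rkN M X ≤ n :=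
  csSup_le ⟨0, ⟨∅, M.empty_indep, Set.empty_subset X, Set.ncard_empty α⟩⟩
    (by rintro m ⟨I, hI, hIX, rfl⟩; exact h I hI hIX)

lemma rkN_eq_of_basis (hE : M.E.Finite) (hJ : M.IsBasis J X) : rkN M X = J.ncard := by
  refine le_antisymm (rkN_le _ fun I hI hIX => ?_) (le_rkN hE hJ.indep hJ.subset)
  obtain ⟨J', hJ', hIJ'⟩ := hI.subset_isBasis_of_subset hIX hJ.subset_ground
  have hfin : J'.Finite := hE.subset hJ'.indep.subset_ground
  calc I.ncard ≤ J'.ncard := Set.ncard_le_ncard hIJ' hfin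
  _ = J.ncard := by
        have := hJ'.encard_eq_encard hJ
        simp [Set.ncard_def, this]

lemma rkN_mono (hE : M.E.Finite) (hXY : X ⊆ Y) : rkN M X ≤ rkN M Y :=
  rkN_le _ fun _ hI hIX => le_rkN hE hI (hIX.trans hXY)

lemma rkN_le_ground (hE : M.E.Finite) : rkN M X ≤ M.E.ncard :=
  rkN_le _ fun I hI _ => Set.ncard_le_ncard hI.subset_ground hE

lemma rkN_union_eq_iff (hE : M.E.Finite) (hX : X ⊆ M.E) (hT : T ⊆ M.E) :
    rkN M (X ∪ T) = rkN M X ↔ T ⊆ M.closure X := by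
  obtain ⟨J, hJ⟩ := M.exists_isBasis X hX
  constructor
  · intro h
    obtain ⟨J', hJ', hJJ'⟩ := hJ.indep.subset_isBasis_of_subset
      (hJ.subset.trans Set.subset_union_left) (Set.union_subset hX hT)
    have hcard : J'.ncard = J.ncard := by
      rw [← rkN_eq_of_basis hE hJ', ← rkN_eq_of_basis hE hJ, h]
    have hfin : J'.Finite := hE.subset hJ'.indep.subset_ground
    have : J = J' := Set.eq_of_subset_of_ncard_le hJJ' hcard.le hfin
    calc T ⊆ X ∪ T := Set.subset_union_right
    _ ⊆ M.closure J' := hJ'.subset_closure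
    _ = M.closure X := by rw [← this, hJ.closure_eq_closure]
  · intro h
    have : M.IsBasis J (X ∪ T) := by
      rw [Matroid.isBasis_iff_indep_subset_closure]
      refine ⟨hJ.indep, hJ.subset.trans Set.subset_union_left, Set.union_subset ?_ ?_⟩
      · exact hJ.subset_closure
      · rw [hJ.closure_eq_closure]; exact h
    rw [rkN_eq_of_basis hE this, rkN_eq_of_basis hE hJ]

lemma flat_iff_closure_eq (hX : X ⊆ M.E) : M.IsFlat X ↔ M.closure X = X := by
  refine ⟨Matroid.IsFlat.closure, fun h => ⟨fun I Y hIX hIY => ?_, hX⟩⟩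
  calc Y ⊆ M.closure I := hIY.subset_closure
  _ = M.closure X := hIX.closure_eq_closure
  _ = X := h

end RankLemmas


section Adapted
variable {M : Matroid α}

lemma exists_indep_forall (hE : M.E.Finite) :
    ∀ s : Finset (Set α), (∀ A ∈ s, A ⊆ M.E) → (∀ A ∈ s, ∀ B ∈ s, A ⊆ B ∨ B ⊆ A) →
      ∃ J, M.Indep J ∧ J ⊆ ⋃₀ ↑s ∧ ∀ A ∈ s, rkN M A ≤ (J ∩ A).ncard := by
  intro s
  induction s using Finset.strongInduction with
  | _ s ih =>
    intro hsub hcomp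
    rcases s.eq_empty_or_nonempty with rfl | hne
    · exact ⟨∅, M.empty_indep, by simp, by simp⟩
    obtain ⟨A₀, hA₀, hmax⟩ := Set.Finite.exists_maximalFor id (↑s : Set (Set α))
      s.finite_toSet (by exact_mod_cast hne)
    have hA₀mem : A₀ ∈ s := by exact_mod_cast hA₀
    have htop : ∀ A ∈ s, A ⊆ A₀ := by
      intro A hA
      rcases hcomp A hA A₀ hA₀mem with h | h
      · exact h
      · exact hmax (by exact_mod_cast hA) h
    obtain ⟨J', hJ'i, hJ'sub, hJ'r⟩ := ih (s.erase A₀) (Finset.erase_ssubset hA₀mem)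
      (fun A hA => hsub A (Finset.mem_of_mem_erase hA))
      (fun A hA B hB => hcomp A (Finset.mem_of_mem_erase hA) B (Finset.mem_of_mem_erase hB))
    have hJ'A₀ : J' ⊆ A₀ := by
      refine hJ'sub.trans (Set.sUnion_subset fun A hA => ?_)
      exact htop A (Finset.mem_of_mem_erase (by exact_mod_cast hA))
    obtain ⟨J, hJ, hJ'J⟩ := hJ'i.subset_isBasis_of_subset hJ'A₀ (hsub A₀ hA₀mem)
    refine ⟨J, hJ.indep, (hJ.subset).trans (Set.subset_sUnion_of_mem (by exact_mod_cast hA₀mem)), ?_⟩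
    intro A hA
    rcases eq_or_ne A A₀ with rfl | hAne
    · rw [rkN_eq_of_basis hE hJ]
      exact Set.ncard_le_ncard (Set.subset_inter Set.Subset.rfl hJ.subset)
        (hE.subset (Set.inter_subset_left.trans hJ.indep.subset_ground))
    · refine (hJ'r A (Finset.mem_erase.2 ⟨hAne, hA⟩)).trans
        (Set.ncard_le_ncard (Set.inter_subset_inter_left _ hJ'J) ?_)
      exact hE.subset (Set.inter_subset_left.trans hJ.indep.subset_ground)

lemma exists_base_forall (hE : M.E.Finite) (s : Finset (Set α))
    (hsub : ∀ A ∈ s, A ⊆ M.E) (hcomp : ∀ A ∈ s, ∀ B ∈ s, A ⊆ B ∨ B ⊆ A) :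
    ∃ B, M.IsBase B ∧ ∀ A ∈ s, rkN M A ≤ (B ∩ A).ncard := by
  obtain ⟨J, hJ, -, hJr⟩ := exists_indep_forall hE s hsub hcomp
  obtain ⟨B, hB, hJB⟩ := hJ.exists_isBase_superset
  refine ⟨B, hB, fun A hA => (hJr A hA).trans (Set.ncard_le_ncard
    (Set.inter_subset_inter_left _ hJB) ?_)⟩
  exact hE.subset (Set.inter_subset_left.trans hB.subset_ground)

end Adapted



lemma chain_enum : ∀ (n : ℕ) (H : Finset (Set α)), H.card = n →
    (∀ F ∈ H, ∀ F' ∈ H, F ⊆ F' ∨ F' ⊆ F) →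
    ∃ C : Fin n → Set α, StrictMono C ∧ (∀ i, C i ∈ H) ∧ ∀ F ∈ H, ∃ i, C i = F := by
  intro n
  induction n with
  | zero =>
    intro H hcard _
    refine ⟨fun i => i.elim0, fun i => i.elim0, fun i => i.elim0, fun F hF => ?_⟩
    rw [Finset.card_eq_zero] at hcard
    simp [hcard] at hF
  | succ n ih =>
    intro H hcard hcomp
    have hne : H.Nonempty := Finset.card_pos.1 (by omega)
    obtain ⟨A₀, hA₀, hmax⟩ := Set.Finite.exists_maximalFor id (↑H : Set (Set α))
      H.finite_toSet (by exact_mod_cast hne)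
    have hA₀mem : A₀ ∈ H := by exact_mod_cast hA₀
    have htop : ∀ A ∈ H, A ⊆ A₀ := by
      intro A hA
      rcases hcomp A hA A₀ hA₀mem with h | h
      · exact h
      · exact hmax (by exact_mod_cast hA) h
    obtain ⟨C', hC'mono, hC'mem, hC'surj⟩ := ih (H.erase A₀)
      (by rw [Finset.card_erase_of_mem hA₀mem, hcard]; rfl)
      (fun A hA B hB => hcomp A (Finset.mem_of_mem_erase hA) B (Finset.mem_of_mem_erase hB))
    refine ⟨Fin.snoc C' A₀, ?_, ?_, ?_⟩
    · intro i j hij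
      rcases Fin.eq_castSucc_or_eq_last j with ⟨j', rfl⟩ | rfl
      · rcases Fin.eq_castSucc_or_eq_last i with ⟨i', rfl⟩ | rfl
        · rw [Fin.snoc_castSucc, Fin.snoc_castSucc]
          exact hC'mono (by exact_mod_cast hij)
        · exact absurd hij (not_lt.2 (Fin.castSucc_lt_last j').le)
      · rcases Fin.eq_castSucc_or_eq_last i with ⟨i', rfl⟩ | rfl
        · rw [Fin.snoc_castSucc, Fin.snoc_last]
          have hmem := hC'mem i'
          have hne' : C' i' ≠ A₀ := (Finset.mem_erase.1 hmem).1
          exact lt_of_le_of_ne (htop _ (Finset.mem_of_mem_erase hmem)) hne'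
        · exact absurd hij (lt_irrefl _)
    · intro i
      rcases Fin.eq_castSucc_or_eq_last i with ⟨i', rfl⟩ | rfl
      · rw [Fin.snoc_castSucc]; exact Finset.mem_of_mem_erase (hC'mem i')
      · rw [Fin.snoc_last]; exact hA₀mem
    · intro F hF
      rcases eq_or_ne F A₀ with rfl | hne'
      · exact ⟨Fin.last n, Fin.snoc_last _ _⟩
      · obtain ⟨i, hi⟩ := hC'surj F (Finset.mem_erase.2 ⟨hne', hF⟩)
        exact ⟨i.castSucc, by rw [Fin.snoc_castSucc]; exact hi⟩



/-- One-dimensional Euler characteristic step: if a weighted sum of indicators of closed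
intervals (or empty sets) vanishes pointwise, the weighted count of nonempty ones vanishes. -/
lemma oneD {k : ℕ} (c : Fin k → ℝ) (ne : Fin k → Prop) (lo hi : Fin k → ℝ)
    (hmM : ∀ t, ne t → lo t ≤ hi t)
    (h : ∀ r : ℝ, ∑ t, c t * (if ne t ∧ r ∈ Set.Icc (lo t) (hi t) then 1 else 0) = 0) :
    ∑ t, c t * (if ne t then 1 else 0) = 0 := by
  have stepA : ∀ v : ℝ, ∑ t, c t * (if ne t ∧ v ∈ Set.Ico (lo t) (hi t) then 1 else 0) = 0 := by
    intro v
    set Q : Finset ℝ := ((Finset.univ.image fun t => lo t - v) ∪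
      (Finset.univ.image fun t => hi t - v)).filter (fun q => 0 < q) with hQ
    set ε : ℝ := if hQne : Q.Nonempty then Q.min' hQne / 2 else 1 with hε
    have hQpos : ∀ q ∈ Q, 0 < q := by
      intro q hq
      rw [hQ] at hq
      exact (Finset.mem_filter.1 hq).2
    have hεpos : 0 < ε := by
      rw [hε]
      split_ifs with hQne
      · have := hQpos _ (Q.min'_mem hQne)
        linarith
      · norm_num
    have hεlt : ∀ q ∈ Q, ε < q := by
      intro q hq
      have hQne : Q.Nonempty := ⟨q, hq⟩
      have h1 : Q.min' hQne ≤ q := Q.min'_le q hq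
      have h2 : 0 < Q.min' hQne := hQpos _ (Q.min'_mem hQne)
      rw [hε, dif_pos hQne]
      linarith
    have key : ∀ t, (if ne t ∧ (v + ε) ∈ Set.Icc (lo t) (hi t) then (1:ℝ) else 0)
        = (if ne t ∧ v ∈ Set.Ico (lo t) (hi t) then 1 else 0) := by
      intro t
      have hiff : (ne t ∧ (v + ε) ∈ Set.Icc (lo t) (hi t)) ↔
          (ne t ∧ v ∈ Set.Ico (lo t) (hi t)) := by
        simp only [Set.mem_Icc, Set.mem_Ico]
        constructor
        · rintro ⟨hne, h1, h2⟩
          refine ⟨hne, ?_, by linarith⟩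
          by_contra hlt
          push_neg at hlt
          have hmemQ : lo t - v ∈ Q := by
            rw [hQ]
            refine Finset.mem_filter.2 ⟨Finset.mem_union_left _ ?_, by linarith⟩
            exact Finset.mem_image_of_mem _ (Finset.mem_univ t)
          have := hεlt _ hmemQ
          linarith
        · rintro ⟨hne, h1, h2⟩
          refine ⟨hne, by linarith, ?_⟩
          have hmemQ : hi t - v ∈ Q := by
            rw [hQ]
            refine Finset.mem_filter.2 ⟨Finset.mem_union_right _ ?_, by linarith⟩
            exact Finset.mem_image_of_mem _ (Finset.mem_univ t)
          have := hεlt _ hmemQ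
          linarith
      exact if_congr hiff rfl rfl
    calc ∑ t, c t * (if ne t ∧ v ∈ Set.Ico (lo t) (hi t) then (1:ℝ) else 0)
        = ∑ t, c t * (if ne t ∧ (v + ε) ∈ Set.Icc (lo t) (hi t) then 1 else 0) := by
          exact Finset.sum_congr rfl fun t _ => by rw [key t]
      _ = 0 := h (v + ε)
  have stepB : ∀ v : ℝ, ∑ t, c t * (if ne t ∧ hi t = v then 1 else 0) = 0 := by
    intro v
    have key : ∀ t, (if ne t ∧ hi t = v then (1:ℝ) else 0)
        = (if ne t ∧ v ∈ Set.Icc (lo t) (hi t) then 1 else 0)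
          - (if ne t ∧ v ∈ Set.Ico (lo t) (hi t) then 1 else 0) := by
      intro t
      by_cases hne : ne t
      · by_cases hv : hi t = v
        · have hlo := hmM t hne
          subst hv
          simp [Set.mem_Icc, Set.mem_Ico, hne, hlo, le_refl, lt_irrefl]
        · simp only [hne, hv, true_and, Set.mem_Icc, Set.mem_Ico, and_false, if_false]
          have : (lo t ≤ v ∧ v ≤ hi t) ↔ (lo t ≤ v ∧ v < hi t) := by
            constructor
            · rintro ⟨h1, h2⟩; exact ⟨h1, lt_of_le_of_ne h2 (fun h => hv h.symm)⟩
            · rintro ⟨h1, h2⟩; exact ⟨h1, h2.le⟩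
          rw [if_congr this rfl rfl]
          ring
      · simp [hne]
    calc ∑ t, c t * (if ne t ∧ hi t = v then (1:ℝ) else 0)
        = ∑ t, (c t * (if ne t ∧ v ∈ Set.Icc (lo t) (hi t) then 1 else 0)
            - c t * (if ne t ∧ v ∈ Set.Ico (lo t) (hi t) then 1 else 0)) := by
          refine Finset.sum_congr rfl fun t _ => ?_
          rw [key t]; ring
      _ = 0 := by rw [Finset.sum_sub_distrib, h v, stepA v, sub_zero]
  -- step C
  have hmain : ∑ t ∈ Finset.univ.filter ne, c t = 0 := by
    rw [← Finset.sum_fiberwise_of_maps_to (g := hi) (t := (Finset.univ.filter ne).image hi)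
      (fun t ht => Finset.mem_image_of_mem hi ht)]
    refine Finset.sum_eq_zero fun v _ => ?_
    rw [Finset.filter_filter, Finset.sum_filter]
    have := stepB v
    simpa [mul_ite] using this
  calc ∑ t, c t * (if ne t then (1:ℝ) else 0)
      = ∑ t ∈ Finset.univ.filter ne, c t := by
        rw [Finset.sum_filter]
        exact Finset.sum_congr rfl fun t _ => by split_ifs <;> ring
    _ = 0 := hmain



/-- Euler characteristic lemma: a pointwise-vanishing combination of indicators of compact
convex sets supported on finitely many coordinates has vanishing weighted nonemptiness count. -/
lemma chi {k : ℕ} (a : Fin k → ℤ) (s : Finset α) :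
    ∀ S : Fin k → Set (α → ℝ), (∀ t, Convex ℝ (S t)) → (∀ t, IsCompact (S t)) →
    (∀ t, ∀ x ∈ S t, ∀ j, j ∉ s → x j = 0) →
    (∀ x, ∑ t, (a t : ℝ) * (S t).indicator 1 x = 0) →
    ∑ t, (a t : ℝ) * (if (S t).Nonempty then 1 else 0) = 0 := by
  induction s using Finset.induction_on with
  | empty =>
    intro S _ _ hsupp hsum
    have h0 := hsum 0
    calc ∑ t, (a t : ℝ) * (if (S t).Nonempty then 1 else 0)
        = ∑ t, (a t : ℝ) * (S t).indicator 1 0 := by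
          refine Finset.sum_congr rfl fun t _ => ?_
          by_cases hne : (S t).Nonempty
          · obtain ⟨x, hx⟩ := hne
            have hx0 : x = 0 := funext fun j => hsupp t x hx j (Finset.notMem_empty j)
            rw [if_pos ⟨x, hx⟩, Set.indicator_of_mem (hx0 ▸ hx) 1]
            rfl
          · rw [if_neg hne, Set.indicator_of_notMem (fun h0m => hne ⟨0, h0m⟩) 1]
      _ = 0 := h0
  | @insert e s hes ih =>
    intro S hconv hcomp hsupp hsum
    -- the projection setting coordinate e to zero
    set π : (α → ℝ) → (α → ℝ) := fun x => Function.update x e 0 with hπ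
    have hπlin : IsLinearMap ℝ π := by
      constructor
      · intro x y
        funext j
        by_cases hj : j = e <;> simp [hπ, Function.update_apply, hj]
      · intro cc x
        funext j
        by_cases hj : j = e <;> simp [hπ, Function.update_apply, hj]
    have hπcont : Continuous π := by
      apply continuous_pi
      intro j
      by_cases hj : j = e
      · simpa [hπ, Function.update_apply, hj] using continuous_const
      · simpa [hπ, Function.update_apply, hj] using continuous_apply j
    set S' : Fin k → Set (α → ℝ) := fun t => π '' S t with hS'
    have hmem0 : ∀ t x, x e = 0 → (x ∈ S' t ↔ {r : ℝ | Function.update x e r ∈ S t}.Nonempty) := by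
      intro t x hxe
      constructor
      · rintro ⟨y, hy, rfl⟩
        refine ⟨y e, ?_⟩
        have : Function.update (π y) e (y e) = y := by
          funext j
          by_cases hj : j = e <;> simp [hπ, Function.update_apply, hj]
        rw [Set.mem_setOf_eq, this]
        exact hy
      · rintro ⟨r, hr⟩
        refine ⟨Function.update x e r, hr, ?_⟩
        funext j
        by_cases hj : j = e <;> simp [hπ, Function.update_apply, hj, hxe.symm, hj]
    have key := ih S' (fun t => (hconv t).is_linear_image hπlin)
      (fun t => ((hcomp t).image hπcont))
      (by
        rintro t x ⟨y, hy, rfl⟩ j hj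
        by_cases hje : j = e
        · simp [hπ, Function.update_apply, hje]
        · rw [hπ]
          simp only [Function.update_apply, if_neg hje]
          exact hsupp t y hy j (by simp [Finset.mem_insert, hje, hj]))
      ?_
    · -- conclude from key
      calc ∑ t, (a t : ℝ) * (if (S t).Nonempty then 1 else 0)
          = ∑ t, (a t : ℝ) * (if (S' t).Nonempty then 1 else 0) := by
            refine Finset.sum_congr rfl fun t _ => ?_
            congr 1
            refine if_congr ?_ rfl rfl
            rw [hS']
            exact (Set.image_nonempty (f := π)).symm
        _ = 0 := key
    -- the pointwise identity for the projected sets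
    intro x
    by_cases hxe : x e = 0
    · -- fibers
      set Iv : Fin k → Set ℝ := fun t => {r : ℝ | Function.update x e r ∈ S t} with hIv
      have hucont : Continuous (fun r : ℝ => Function.update x e r) := by
        apply continuous_pi
        intro j
        by_cases hj : j = e
        · simpa [Function.update_apply, hj] using continuous_id'
        · simpa [Function.update_apply, hj] using continuous_const
      have hIconv : ∀ t, Convex ℝ (Iv t) := by
        intro t r1 h1 r2 h2 θ η hθ hη hθη
        show Function.update x e (θ * r1 + η * r2) ∈ S t
        have heq : Function.update x e (θ * r1 + η * r2)
            = θ • Function.update x e r1 + η • Function.update x e r2 := by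
          funext j
          by_cases hj : j = e
          · simp [Function.update_apply, hj]
          · simp [Function.update_apply, hj]
            rw [← add_mul, hθη, one_mul]
        rw [heq]
        exact hconv t h1 h2 hθ hη hθη
      have hIclosed : ∀ t, IsClosed (Iv t) := fun t =>
        (hcomp t).isClosed.preimage hucont
      have hIbddA : ∀ t, BddAbove (Iv t) := by
        intro t
        have hsub : Iv t ⊆ (fun y => y e) '' S t := by
          intro r hr
          exact ⟨Function.update x e r, hr, by simp [Function.update_apply]⟩
        exact (((hcomp t).image (continuous_apply e)).bddAbove).mono hsub
      have hIbddB : ∀ t, BddBelow (Iv t) := by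
        intro t
        have hsub : Iv t ⊆ (fun y => y e) '' S t := by
          intro r hr
          exact ⟨Function.update x e r, hr, by simp [Function.update_apply]⟩
        exact (((hcomp t).image (continuous_apply e)).bddBelow).mono hsub
      have hIcc : ∀ t, (Iv t).Nonempty → Iv t = Set.Icc (sInf (Iv t)) (sSup (Iv t)) := by
        intro t hne
        apply Set.Subset.antisymm
        · intro r hr
          exact ⟨csInf_le (hIbddB t) hr, le_csSup (hIbddA t) hr⟩
        · exact ((hIconv t).ordConnected).out
            ((hIclosed t).csInf_mem hne (hIbddB t))
            ((hIclosed t).csSup_mem hne (hIbddA t))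
      have h1d := oneD (fun t => (a t : ℝ)) (fun t => (Iv t).Nonempty)
        (fun t => sInf (Iv t)) (fun t => sSup (Iv t))
        (fun t hne => by
          obtain ⟨r, hr⟩ := hne
          exact le_trans (csInf_le (hIbddB t) hr) (le_csSup (hIbddA t) hr))
        (by
          intro r
          have := hsum (Function.update x e r)
          calc ∑ t, (a t : ℝ) * (if (Iv t).Nonempty ∧ r ∈ Set.Icc (sInf (Iv t)) (sSup (Iv t)) then 1 else 0)
              = ∑ t, (a t : ℝ) * (S t).indicator 1 (Function.update x e r) := by
                refine Finset.sum_congr rfl fun t _ => ?_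
                congr 1
                rw [Set.indicator_apply]
                refine (if_congr ?_ rfl rfl).symm
                constructor
                · intro hmem
                  have hne : (Iv t).Nonempty := ⟨r, hmem⟩
                  exact ⟨hne, by rw [← hIcc t hne]; exact hmem⟩
                · rintro ⟨hne, hr⟩
                  show r ∈ Iv t
                  rw [hIcc t hne]
                  exact hr
            _ = 0 := this)
      calc ∑ t, (a t : ℝ) * (S' t).indicator 1 x
          = ∑ t, (a t : ℝ) * (if (Iv t).Nonempty then 1 else 0) := by
            refine Finset.sum_congr rfl fun t _ => ?_
            congr 1
            rw [Set.indicator_apply]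
            exact if_congr (hmem0 t x hxe) rfl rfl
        _ = 0 := h1d
    · -- x e ≠ 0 : all indicators vanish
      refine Finset.sum_eq_zero fun t _ => ?_
      rw [Set.indicator_of_notMem, mul_zero]
      rintro ⟨y, _, rfl⟩
      exact hxe (by simp [hπ, Function.update_apply])



section Geometry

/-- The finset underlying a subset of the finite ground set. -/
noncomputable def fset {E : Set α} (hE : E.Finite) (S : Set α) : Finset α :=
  hE.toFinset.filter (· ∈ S)

lemma mem_fset {E : Set α} (hE : E.Finite) {S : Set α} (hS : S ⊆ E) {x : α} :
    x ∈ fset hE S ↔ x ∈ S := by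
  simp only [fset, Finset.mem_filter, Set.Finite.mem_toFinset]
  exact ⟨fun h => h.2, fun h => ⟨hS h, h⟩⟩

lemma sum_fset_indicator {E : Set α} (hE : E.Finite) {S : Set α} (hS : S ⊆ E) (B : Set α)
    (hBfin : (B ∩ S).Finite) :
    ∑ e ∈ fset hE S, (B.indicator (1 : α → ℝ)) e = ((B ∩ S).ncard : ℝ) := by
  have : ∑ e ∈ fset hE S, (B.indicator (1 : α → ℝ)) e
      = ∑ e ∈ (fset hE S).filter (· ∈ B), 1 := by
    rw [Finset.sum_filter]
    refine Finset.sum_congr rfl fun e _ => ?_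
    rw [Set.indicator_apply]
    split_ifs <;> simp_all
  rw [this, Finset.sum_const, nsmul_eq_mul, mul_one]
  congr 1
  rw [← Set.ncard_coe_finset]
  congr 1
  ext z
  simp only [Finset.coe_filter, Set.mem_setOf_eq, mem_fset hE hS, Set.mem_inter_iff]
  tauto

lemma polytope_subset_halfspace {M : Matroid α} (hE : M.E.Finite) {S : Set α} (hS : S ⊆ M.E) :
    ∀ x ∈ polytope M, ∑ e ∈ fset hE S, x e ≤ (rkN M S : ℝ) := by
  have hconv : Convex ℝ {x : α → ℝ | ∑ e ∈ fset hE S, x e ≤ (rkN M S : ℝ)} := by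
    refine convex_halfSpace_le ?_ _
    constructor
    · intro x y; simp [Finset.sum_add_distrib]
    · intro c x; simp [Finset.mul_sum]
  refine fun x hx => convexHull_min ?_ hconv hx
  rintro y ⟨B, hB, rfl⟩
  have hBS : (B ∩ S).Finite := hE.subset (Set.inter_subset_left.trans hB.subset_ground)
  rw [Set.mem_setOf_eq, sum_fset_indicator hE hS B hBS]
  exact_mod_cast le_rkN hE (hB.indep.subset Set.inter_subset_left) Set.inter_subset_right

lemma polytope_support {M : Matroid α} (hE : M.E.Finite) :
    ∀ x ∈ polytope M, ∀ j, j ∉ hE.toFinset → x j = 0 := by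
  have hconv : Convex ℝ {x : α → ℝ | ∀ j, j ∉ hE.toFinset → x j = 0} := by
    intro x hx y hy θ η _ _ _
    intro j hj
    simp [hx j hj, hy j hj]
  intro x hx
  refine convexHull_min ?_ hconv hx
  rintro y ⟨B, hB, rfl⟩ j hj
  refine Set.indicator_of_notMem (fun hjB => ?_) 1
  exact hj (hE.mem_toFinset.2 (hB.subset_ground hjB))

lemma polytope_compact {M : Matroid α} (hE : M.E.Finite) : IsCompact (polytope M) := by
  have hfin : {x : α → ℝ | ∃ B, M.IsBase B ∧ x = B.indicator 1}.Finite := by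
    have himg : {x : α → ℝ | ∃ B, M.IsBase B ∧ x = B.indicator 1}
        = (fun B : Set α => B.indicator (1 : α → ℝ)) '' {B | M.IsBase B} := by
      ext x
      simp only [Set.mem_setOf_eq, Set.mem_image]
      constructor
      · rintro ⟨B, hB, rfl⟩; exact ⟨B, hB, rfl⟩
      · rintro ⟨B, hB, rfl⟩; exact ⟨B, hB, rfl⟩
    rw [himg]
    exact Set.Finite.image _ (hE.finite_subsets.subset fun B hB => hB.subset_ground)
  exact hfin.isCompact_convexHull ℝ

end Geometry

section PvalGeq

variable {E : Set α} {k : ℕ} {Ms : Fin k → Matroid α} {a : Fin k → ℤ}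

lemma pval_geq (hE : E.Finite) (hground : ∀ t, (Ms t).E = E)
    (hval : ∀ x : α → ℝ, ∑ t, (a t : ℝ) * Set.indicator (polytope (Ms t)) 1 x = 0)
    {ι : Type} [Fintype ι] (C : ι → Set α) (σ : ι → ℕ)
    (hsub : ∀ i, C i ⊆ E) (hcomp : ∀ i j, C i ⊆ C j ∨ C j ⊆ C i) :
    ∑ t, a t * (if ∀ i, σ i ≤ rkN (Ms t) (C i) then 1 else 0) = 0 := by
  have hEt : ∀ t, (Ms t).E.Finite := fun t => (hground t).symm ▸ hE
  set K : Set (α → ℝ) := ⋂ i, {x | (σ i : ℝ) ≤ ∑ e ∈ fset hE (C i), x e} with hK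
  have hKconv : Convex ℝ K := by
    refine convex_iInter fun i => ?_
    refine convex_halfSpace_ge ?_ _
    constructor
    · intro x y; simp [Finset.sum_add_distrib]
    · intro c x; simp [Finset.mul_sum]
  have hKclosed : IsClosed K := by
    refine isClosed_iInter fun i => ?_
    exact isClosed_le continuous_const (continuous_finset_sum _ fun e _ => continuous_apply e)
  set S : Fin k → Set (α → ℝ) := fun t => polytope (Ms t) ∩ K with hS
  have hne_iff : ∀ t, (S t).Nonempty ↔ ∀ i, σ i ≤ rkN (Ms t) (C i) := by
    intro t
    constructor
    · rintro ⟨x, hxP, hxK⟩ i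
      have h1 : ∑ e ∈ fset hE (C i), x e ≤ (rkN (Ms t) (C i) : ℝ) := by
        have hfs : fset hE (C i) = fset (hEt t) (C i) := by
          ext z
          simp [fset, Set.Finite.mem_toFinset, hground t]
        rw [hfs]
        exact polytope_subset_halfspace (hEt t)
          (show C i ⊆ (Ms t).E by rw [hground t]; exact hsub i) x hxP
      have h2 : (σ i : ℝ) ≤ ∑ e ∈ fset hE (C i), x e := by
        have := Set.mem_iInter.1 hxK i
        exact this
      exact_mod_cast h2.trans h1
    · intro hrk
      obtain ⟨B, hB, hBr⟩ := exists_base_forall (hEt t) (Finset.univ.image C)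
        (by
          intro A hA
          obtain ⟨i, -, rfl⟩ := Finset.mem_image.1 hA
          rw [hground t]; exact hsub i)
        (by
          intro A hA B' hB'
          obtain ⟨i, -, rfl⟩ := Finset.mem_image.1 hA
          obtain ⟨j, -, rfl⟩ := Finset.mem_image.1 hB'
          exact hcomp i j)
      refine ⟨B.indicator 1, ?_, ?_⟩
      · exact subset_convexHull ℝ _ ⟨B, hB, rfl⟩
      · rw [hK]
        refine Set.mem_iInter.2 fun i => ?_
        have hBfin : (B ∩ C i).Finite := hE.subset (Set.inter_subset_right.trans (hsub i))
        show (σ i : ℝ) ≤ ∑ e ∈ fset hE (C i), B.indicator 1 e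
        rw [sum_fset_indicator hE (hsub i) B hBfin]
        have := hBr (C i) (Finset.mem_image_of_mem C (Finset.mem_univ i))
        exact_mod_cast (hrk i).trans this
  have hchi := chi a hE.toFinset S
    (fun t => ((convex_convexHull ℝ _).inter hKconv))
    (fun t => ((polytope_compact (hEt t)).inter_right hKclosed))
    (fun t x hx j hj =>
      polytope_support (hEt t) x hx.1 j
        (by simpa [Set.Finite.mem_toFinset, hground t] using hj))
    (by
      intro x
      by_cases hxK : x ∈ K
      · refine (Finset.sum_congr rfl fun t _ => ?_).trans (hval x)
        congr 1
        rw [Set.indicator_apply, Set.indicator_apply]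
        refine if_congr ?_ rfl rfl
        rw [hS]
        simp only [Set.mem_inter_iff]
        exact ⟨fun h => h.1, fun h => ⟨h, hxK⟩⟩
      · refine Finset.sum_eq_zero fun t _ => ?_
        rw [Set.indicator_of_notMem (fun hmem => hxK hmem.2), mul_zero])
  have : ∑ t, (a t : ℝ) * (if ∀ i, σ i ≤ rkN (Ms t) (C i) then 1 else 0) = 0 := by
    refine Eq.trans (Finset.sum_congr rfl fun t _ => ?_) hchi
    congr 1
    exact (if_congr (hne_iff t).symm rfl rfl)
  have hcast : ((∑ t, a t * (if ∀ i, σ i ≤ rkN (Ms t) (C i) then (1:ℤ) else 0) : ℤ) : ℝ)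
      = ∑ t, (a t : ℝ) * (if ∀ i, σ i ≤ rkN (Ms t) (C i) then (1:ℝ) else 0) := by
    push_cast [apply_ite (Int.cast : ℤ → ℝ)]
    rfl
  exact_mod_cast hcast.trans this

end PvalGeq


/-- indicator of a conjunction over a fintype as a product. -/
lemma ite_forall_prod {ι : Type} [Fintype ι] (P : ι → Prop) {d1 : Decidable (∀ i, P i)}
    {d2 : ∀ i, Decidable (P i)} :
    (@ite _ (∀ i, P i) d1 (1:ℤ) 0) = ∏ i, (@ite _ (P i) (d2 i) 1 0) := by
  by_cases h : ∀ i, P i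
  · rw [if_pos h]
    rw [Finset.prod_congr rfl fun i _ => if_pos (h i)]
    simp
  · rw [if_neg h]
    push_neg at h
    obtain ⟨i₀, hi₀⟩ := h
    refine (Finset.prod_eq_zero (Finset.mem_univ i₀) ?_).symm
    rw [if_neg hi₀]

lemma eq_expand {M : Matroid α} {ι : Type} [Fintype ι] (C : ι → Set α) (σ : ι → ℕ) :
    (if ∀ i, rkN M (C i) = σ i then (1:ℤ) else 0)
    = ∑ T ∈ (Finset.univ : Finset ι).powerset, (-1)^T.card *
        (if ∀ i, σ i + (if i ∈ T then 1 else 0) ≤ rkN M (C i) then 1 else 0) := by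
  by_cases hlow : ∀ i, σ i ≤ rkN M (C i)
  · set U : Finset ι := Finset.univ.filter (fun i => σ i + 1 ≤ rkN M (C i)) with hU
    have hiff : ∀ T : Finset ι,
        (∀ i, σ i + (if i ∈ T then 1 else 0) ≤ rkN M (C i)) ↔ T ⊆ U := by
      intro T
      constructor
      · intro h i hiT
        rw [hU, Finset.mem_filter]
        refine ⟨Finset.mem_univ i, ?_⟩
        have := h i
        rw [if_pos hiT] at this
        exact this
      · intro hTU i
        by_cases hiT : i ∈ T
        · rw [if_pos hiT]
          have := hTU hiT
          rw [hU, Finset.mem_filter] at this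
          exact this.2
        · rw [if_neg hiT, add_zero]
          exact hlow i
    have hsum : ∑ T ∈ (Finset.univ : Finset ι).powerset, (-1:ℤ)^T.card *
        (if ∀ i, σ i + (if i ∈ T then 1 else 0) ≤ rkN M (C i) then 1 else 0)
        = ∑ T ∈ U.powerset, (-1:ℤ)^T.card := by
      rw [← Finset.sum_subset (Finset.powerset_mono.2 (Finset.subset_univ U))]
      · refine Finset.sum_congr rfl fun T hT => ?_
        rw [if_pos ((hiff T).2 (Finset.mem_powerset.1 hT)), mul_one]
      · intro T _ hTU
        rw [if_neg, mul_zero]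
        rw [hiff T]
        exact fun h => hTU (Finset.mem_powerset.2 h)
    rw [hsum, Finset.sum_powerset_neg_one_pow_card]
    have : (∀ i, rkN M (C i) = σ i) ↔ U = ∅ := by
      rw [Finset.eq_empty_iff_forall_notMem]
      constructor
      · intro h i hi
        rw [hU, Finset.mem_filter] at hi
        have h1 := h i
        have h2 := hi.2
        omega
      · intro h i
        refine le_antisymm ?_ (hlow i)
        by_contra hc
        push_neg at hc
        exact h i (by rw [hU, Finset.mem_filter]; exact ⟨Finset.mem_univ i, hc⟩)
    exact if_congr this rfl rfl
  · push_neg at hlow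
    obtain ⟨i₀, hi₀⟩ := hlow
    rw [if_neg (fun h => hi₀.not_ge (h i₀).ge)]
    refine (Finset.sum_eq_zero fun T _ => ?_).symm
    have hcond : ¬ ∀ i, σ i + (if i ∈ T then 1 else 0) ≤ rkN M (C i) := by
      intro h
      have h1 := h i₀
      have h2 : σ i₀ ≤ rkN M (C i₀) := le_trans (by split_ifs <;> omega) h1
      exact hi₀.not_ge h2
    rw [if_neg hcond, mul_zero]

section Pval
variable {E : Set α} {k : ℕ} {Ms : Fin k → Matroid α} {a : Fin k → ℤ}

lemma pval_eq (hE : E.Finite) (hground : ∀ t, (Ms t).E = E)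
    (hval : ∀ x : α → ℝ, ∑ t, (a t : ℝ) * Set.indicator (polytope (Ms t)) 1 x = 0)
    {ι : Type} [Fintype ι] (C : ι → Set α) (σ : ι → ℕ)
    (hsub : ∀ i, C i ⊆ E) (hcomp : ∀ i j, C i ⊆ C j ∨ C j ⊆ C i) :
    ∑ t, a t * (if ∀ i, rkN (Ms t) (C i) = σ i then 1 else 0) = 0 := by
  calc ∑ t, a t * (if ∀ i, rkN (Ms t) (C i) = σ i then (1:ℤ) else 0)
      = ∑ t, ∑ T ∈ (Finset.univ : Finset ι).powerset, a t * ((-1)^T.card *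
          (if ∀ i, σ i + (if i ∈ T then 1 else 0) ≤ rkN (Ms t) (C i) then 1 else 0)) := by
        refine Finset.sum_congr rfl fun t _ => ?_
        rw [eq_expand C σ, Finset.mul_sum]
    _ = ∑ T ∈ (Finset.univ : Finset ι).powerset, (-1)^T.card *
          ∑ t, a t * (if ∀ i, σ i + (if i ∈ T then 1 else 0) ≤ rkN (Ms t) (C i) then 1 else 0) := by
        rw [Finset.sum_comm]
        refine Finset.sum_congr rfl fun T _ => ?_
        rw [Finset.mul_sum]
        refine Finset.sum_congr rfl fun t _ => ?_
        ring
    _ = 0 := by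
        refine Finset.sum_eq_zero fun T _ => ?_
        rw [pval_geq hE hground hval C (fun i => σ i + (if i ∈ T then 1 else 0)) hsub hcomp,
          mul_zero]

lemma pval_flag (hE : E.Finite) (hground : ∀ t, (Ms t).E = E)
    (hval : ∀ x : α → ℝ, ∑ t, (a t : ℝ) * Set.indicator (polytope (Ms t)) 1 x = 0)
    (m : ℕ) (C : Fin m → Set α) (σ : Fin m → ℕ)
    (hmono : Monotone C) (hsub : ∀ i, C i ⊆ E) :
    ∑ t, a t * (if ∀ i, (Ms t).IsFlat (C i) ∧ rkN (Ms t) (C i) = σ i then 1 else 0) = 0 := by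
  set nxt : Fin m → Set α := fun i => if h : (i:ℕ)+1 < m then C (⟨(i:ℕ)+1, h⟩) else E with hnxt
  have hnxt_pos : ∀ (i : Fin m) (h : (i:ℕ)+1 < m), nxt i = C ⟨(i:ℕ)+1, h⟩ := by
    intro i h
    simp only [hnxt]
    rw [dif_pos h]
  have hnxt_neg : ∀ (i : Fin m), ¬((i:ℕ)+1 < m) → nxt i = E := by
    intro i h
    simp only [hnxt]
    rw [dif_neg h]
  have hnxtsub : ∀ i, nxt i ⊆ E := by
    intro i
    by_cases h : (i:ℕ)+1 < m
    · rw [hnxt_pos i h]; exact hsub _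
    · rw [hnxt_neg i h]
  have hCnxt : ∀ i, C i ⊆ nxt i := by
    intro i
    by_cases h : (i:ℕ)+1 < m
    · rw [hnxt_pos i h]; exact hmono (by simp [Fin.le_def])
    · rw [hnxt_neg i h]; exact hsub i
  have hnxtC : ∀ i j : Fin m, (i:ℕ) < (j:ℕ) → nxt i ⊆ C j := by
    intro i j hij
    have h : (i:ℕ)+1 < m := by omega
    rw [hnxt_pos i h]
    exact hmono (by simp only [Fin.le_def, Fin.val_mk]; omega)
  set D : Fin m → Finset α := fun i => fset hE (nxt i \ C i) with hD
  have hDcoe : ∀ i, ((D i : Finset α) : Set α) = nxt i \ C i := by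
    intro i
    ext z
    rw [hD]
    simp only [Finset.coe_filter]
    rw [Finset.mem_coe, mem_fset hE (Set.diff_subset.trans (hnxtsub i))]
  -- the per-matroid expansion identity
  have expand : ∀ (M : Matroid α), M.E = E →
      (if ∀ i, M.IsFlat (C i) ∧ rkN M (C i) = σ i then (1:ℤ) else 0)
      = ∑ T ∈ Fintype.piFinset (fun i => (D i).powerset),
          (-1)^(∑ i, (T i).card) *
          (if ∀ i, rkN M (C i) = σ i ∧ rkN M (C i ∪ ↑(T i)) = σ i then 1 else 0) := by
    intro M hME
    have hsub' : ∀ i, C i ⊆ M.E := fun i => hME.symm ▸ hsub i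
    have hEM : M.E.Finite := hME.symm ▸ hE
    -- rewrite RHS as product of inner sums
    have hrhs : ∑ T ∈ Fintype.piFinset (fun i => (D i).powerset),
          (-1:ℤ)^(∑ i, (T i).card) *
          (if ∀ i, rkN M (C i) = σ i ∧ rkN M (C i ∪ ↑(T i)) = σ i then 1 else 0)
        = ∏ i, ∑ T ∈ (D i).powerset, (-1:ℤ)^T.card *
            (if rkN M (C i) = σ i ∧ rkN M (C i ∪ ↑T) = σ i then 1 else 0) := by
      rw [Finset.prod_univ_sum]
      refine Finset.sum_congr rfl fun T _ => ?_
      rw [Finset.prod_mul_distrib,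
        ite_forall_prod (fun i => rkN M (C i) = σ i ∧ rkN M (C i ∪ ↑(T i)) = σ i),
        ← Finset.prod_pow_eq_pow_sum]
    rw [hrhs]
    have inner : ∀ i, ∑ T ∈ (D i).powerset, (-1:ℤ)^T.card *
          (if rkN M (C i) = σ i ∧ rkN M (C i ∪ ↑T) = σ i then 1 else 0)
        = (if rkN M (C i) = σ i ∧ M.closure (C i) ∩ (nxt i \ C i) = ∅ then 1 else 0) := by
      intro i
      by_cases hr : rkN M (C i) = σ i
      · set DZ : Finset α := (D i).filter (fun e => e ∈ M.closure (C i)) with hDZ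
        have hstep : ∀ T ∈ (D i).powerset,
            ((if rkN M (C i) = σ i ∧ rkN M (C i ∪ ↑T) = σ i then (1:ℤ) else 0)
              = if T ⊆ DZ then 1 else 0) := by
          intro T hT
          have hTD : T ⊆ D i := Finset.mem_powerset.1 hT
          have hTE : (T : Set α) ⊆ M.E := by
            intro z hz
            have := hTD (by exact_mod_cast hz)
            rw [← Finset.mem_coe, hDcoe i] at this
            exact hME.symm ▸ (Set.diff_subset.trans (hnxtsub i)) this
          have : rkN M (C i ∪ ↑T) = σ i ↔ (T : Set α) ⊆ M.closure (C i) := by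
            rw [← hr]
            exact rkN_union_eq_iff hEM (hsub' i) hTE
          have h2 : ((T : Set α) ⊆ M.closure (C i)) ↔ T ⊆ DZ := by
            constructor
            · intro h z hz
              rw [hDZ, Finset.mem_filter]
              exact ⟨hTD hz, h (by exact_mod_cast hz)⟩
            · intro h z hz
              have := h (by exact_mod_cast hz)
              rw [hDZ, Finset.mem_filter] at this
              exact this.2
          rw [if_congr (and_iff_right hr) rfl rfl, if_congr (this.trans h2) rfl rfl]
        calc ∑ T ∈ (D i).powerset, (-1:ℤ)^T.card *
              (if rkN M (C i) = σ i ∧ rkN M (C i ∪ ↑T) = σ i then 1 else 0)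
            = ∑ T ∈ (D i).powerset, (-1:ℤ)^T.card * (if T ⊆ DZ then 1 else 0) := by
              refine Finset.sum_congr rfl fun T hT => by rw [hstep T hT]
          _ = ∑ T ∈ DZ.powerset, (-1:ℤ)^T.card := by
              have hDZsub : DZ ⊆ D i := Finset.filter_subset _ _
              refine Eq.trans (Finset.sum_subset (Finset.powerset_mono.2 hDZsub)
                (fun T _ hT => ?_)).symm (Finset.sum_congr rfl fun T hT => ?_)
              · rw [if_neg (fun h => hT (Finset.mem_powerset.2 h)), mul_zero]
              · rw [if_pos (Finset.mem_powerset.1 hT), mul_one]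
          _ = (if rkN M (C i) = σ i ∧ M.closure (C i) ∩ (nxt i \ C i) = ∅ then 1 else 0) := by
              rw [Finset.sum_powerset_neg_one_pow_card]
              refine if_congr ?_ rfl rfl
              rw [and_iff_right hr, Finset.eq_empty_iff_forall_notMem,
                Set.eq_empty_iff_forall_notMem]
              constructor
              · intro h z hz
                refine h z ?_
                rw [hDZ, Finset.mem_filter]
                refine ⟨?_, hz.1⟩
                have : z ∈ (↑(D i) : Set α) := by rw [hDcoe i]; exact hz.2
                exact_mod_cast this
              · intro h z hz
                rw [hDZ, Finset.mem_filter] at hz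
                refine h z ⟨hz.2, ?_⟩
                have : z ∈ (↑(D i) : Set α) := by exact_mod_cast hz.1
                rw [hDcoe i] at this
                exact this
      · refine Eq.trans (Finset.sum_eq_zero fun T _ => ?_) (by rw [if_neg (fun h => hr h.1)])
        rw [if_neg (fun h => hr h.1), mul_zero]
    rw [Finset.prod_congr rfl fun i _ => inner i,
      ← ite_forall_prod (fun i => rkN M (C i) = σ i ∧ M.closure (C i) ∩ (nxt i \ C i) = ∅)]
    refine if_congr ?_ rfl rfl
    constructor
    · intro h i
      refine ⟨(h i).2, ?_⟩
      rw [(h i).1.closure]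
      exact Set.inter_diff_self _ _
    · intro h
      have hflats : ∀ d : ℕ, ∀ i : Fin m, m - (i:ℕ) ≤ d → M.IsFlat (C i) := by
        intro d
        induction d with
        | zero =>
          intro i hi
          exfalso
          have h2 : m ≤ (i:ℕ) := Nat.sub_eq_zero_iff_le.1 (Nat.le_zero.1 hi)
          exact absurd i.isLt (not_lt.2 h2)
        | succ d ih =>
          intro i hi
          have hnf : M.IsFlat (nxt i) := by
            by_cases hlt : (i:ℕ)+1 < m
            · rw [hnxt_pos i hlt]
              refine ih ⟨(i:ℕ)+1, hlt⟩ ?_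
              simp only [Fin.val_mk]
              rw [← Nat.sub_sub]
              exact Nat.sub_le_iff_le_add.2 hi
            · rw [hnxt_neg i hlt]
              exact hME ▸ M.ground_isFlat
          have hclsub : M.closure (C i) ⊆ nxt i := by
            calc M.closure (C i) ⊆ M.closure (nxt i) := M.closure_subset_closure (hCnxt i)
            _ = nxt i := hnf.closure
          have hclC : M.closure (C i) ⊆ C i := by
            intro z hz
            by_contra hzC
            have : z ∈ M.closure (C i) ∩ (nxt i \ C i) := ⟨hz, hclsub hz, hzC⟩
            rw [(h i).2] at this
            exact this
          rw [flat_iff_closure_eq (hsub' i)]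
          exact hclC.antisymm (M.subset_closure (C i) (hsub' i))
      intro i
      exact ⟨hflats m i (Nat.sub_le m _), (h i).1⟩
  -- sum over matroids
  calc ∑ t, a t * (if ∀ i, (Ms t).IsFlat (C i) ∧ rkN (Ms t) (C i) = σ i then (1:ℤ) else 0)
      = ∑ t, ∑ T ∈ Fintype.piFinset (fun i => (D i).powerset), a t * ((-1)^(∑ i, (T i).card) *
          (if ∀ i, rkN (Ms t) (C i) = σ i ∧ rkN (Ms t) (C i ∪ ↑(T i)) = σ i then 1 else 0)) := by
        refine Finset.sum_congr rfl fun t _ => ?_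
        rw [expand (Ms t) (hground t), Finset.mul_sum]
    _ = ∑ T ∈ Fintype.piFinset (fun i => (D i).powerset), (-1:ℤ)^(∑ i, (T i).card) *
          ∑ t, a t * (if ∀ i, rkN (Ms t) (C i) = σ i ∧ rkN (Ms t) (C i ∪ ↑(T i)) = σ i then 1 else 0) := by
        rw [Finset.sum_comm]
        refine Finset.sum_congr rfl fun T _ => ?_
        rw [Finset.mul_sum]
        refine Finset.sum_congr rfl fun t _ => ?_
        ring
    _ = 0 := by
        refine Finset.sum_eq_zero fun T hT => ?_
        have hTD : ∀ i, (T i : Set α) ⊆ nxt i \ C i := by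
          intro i
          have := (Fintype.mem_piFinset.1 hT) i
          rw [Finset.mem_powerset] at this
          intro z hz
          rw [← hDcoe i]
          exact_mod_cast this (by exact_mod_cast hz)
        have hz : ∑ t, a t * (if ∀ s : Fin m ⊕ Fin m,
            rkN (Ms t) (Sum.elim C (fun i => C i ∪ ↑(T i)) s) = Sum.elim σ σ s then (1:ℤ) else 0) = 0 := by
          refine pval_eq hE hground hval (Sum.elim C (fun i => C i ∪ ↑(T i))) (Sum.elim σ σ) ?_ ?_
          · intro s
            rcases s with i | i
            · exact hsub i
            · exact Set.union_subset (hsub i) ((hTD i).trans (Set.diff_subset.trans (hnxtsub i)))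
          · have hkey : ∀ i j : Fin m, (i:ℕ) < (j:ℕ) → C i ∪ ↑(T i) ⊆ C j := by
              intro i j hij
              refine Set.union_subset (hmono (by rw [Fin.le_def]; omega)) ?_
              exact ((hTD i).trans Set.diff_subset).trans (hnxtC i j hij)
            intro s s'
            rcases s with i | i <;> rcases s' with j | j
            · rcases le_total i j with h | h
              · exact Or.inl (hmono h)
              · exact Or.inr (hmono h)
            · rcases le_or_gt i j with h | h
              · exact Or.inl ((hmono h).trans Set.subset_union_left)
              · exact Or.inr (hkey j i (by exact_mod_cast h))
            · rcases le_or_gt j i with h | h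
              · exact Or.inr ((hmono h).trans Set.subset_union_left)
              · exact Or.inl (hkey i j (by exact_mod_cast h))
            · rcases lt_trichotomy i j with h | h | h
              · exact Or.inl ((hkey i j (by exact_mod_cast h)).trans Set.subset_union_left)
              · exact Or.inl (h ▸ Set.Subset.rfl)
              · exact Or.inr ((hkey j i (by exact_mod_cast h)).trans Set.subset_union_left)
        have hiff : ∀ t, (∀ i, rkN (Ms t) (C i) = σ i ∧ rkN (Ms t) (C i ∪ ↑(T i)) = σ i)
            ↔ (∀ s : Fin m ⊕ Fin m,
              rkN (Ms t) (Sum.elim C (fun i => C i ∪ ↑(T i)) s) = Sum.elim σ σ s) := by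
          intro t
          rw [Sum.forall]
          constructor
          · intro h; exact ⟨fun i => (h i).1, fun i => (h i).2⟩
          · intro h i; exact ⟨h.1 i, h.2 i⟩
        calc (-1:ℤ)^(∑ i, (T i).card) *
              ∑ t, a t * (if ∀ i, rkN (Ms t) (C i) = σ i ∧ rkN (Ms t) (C i ∪ ↑(T i)) = σ i then 1 else 0)
            = (-1:ℤ)^(∑ i, (T i).card) * ∑ t, a t * (if ∀ s : Fin m ⊕ Fin m,
                rkN (Ms t) (Sum.elim C (fun i => C i ∪ ↑(T i)) s) = Sum.elim σ σ s then 1 else 0) := by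
              congr 1
              exact Finset.sum_congr rfl fun t _ => by rw [if_congr (hiff t) rfl rfl]
          _ = 0 := by rw [hz, mul_zero]

end Pval


lemma ite_and_one {P Q : Prop} {d1 : Decidable (P ∧ Q)} {d2 : Decidable P} {d3 : Decidable Q} :
    (@ite _ (P ∧ Q) d1 (1:ℤ) 0) = (@ite _ P d2 (1:ℤ) 0) * (@ite _ Q d3 (1:ℤ) 0) := by
  by_cases hP : P <;> by_cases hQ : Q <;> simp [hP, hQ]

section PvalCond
variable {E : Set α} {k : ℕ} {Ms : Fin k → Matroid α} {a : Fin k → ℤ}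

lemma pval_cond (hE : E.Finite) (hground : ∀ t, (Ms t).E = E)
    (hval : ∀ x : α → ℝ, ∑ t, (a t : ℝ) * Set.indicator (polytope (Ms t)) 1 x = 0)
    (Fl : Finset (Set α)) (I : Finset ℕ) (G : Finset (Set α)) :
    ∑ t, a t * (if IsFlagF (Ms t) G ∧ G.image (rkN (Ms t)) = I ∧ Disjoint G Fl ∧
      IsFlagF (Ms t) (G ∪ Fl) then (1:ℤ) else 0) = 0 := by
  by_cases hc₀ : Disjoint G Fl ∧ (∀ F ∈ G ∪ Fl, F.Nonempty ∧ F ≠ E ∧ F ⊆ E) ∧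
      (∀ F ∈ G ∪ Fl, ∀ F' ∈ G ∪ Fl, F ⊆ F' ∨ F' ⊆ F)
  · set n := (G ∪ Fl).card with hn
    obtain ⟨C, hCmono, hCmem, hCsurj⟩ := chain_enum n (G ∪ Fl) hn.symm hc₀.2.2
    have hCsubE : ∀ i, C i ⊆ E := fun i => (hc₀.2.1 _ (hCmem i)).2.2
    have hidxG : (Finset.univ.filter (fun i : Fin n => C i ∈ G)).image C = G := by
      ext F
      simp only [Finset.mem_image, Finset.mem_filter, Finset.mem_univ, true_and]
      constructor
      · rintro ⟨i, hiG, rfl⟩; exact hiG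
      · intro hF
        obtain ⟨i, hi⟩ := hCsurj F (Finset.mem_union_left _ hF)
        exact ⟨i, by rw [hi]; exact hF, hi⟩
    have himg : ∀ (f : Set α → ℕ), G.image f
        = (Finset.univ.filter (fun i : Fin n => C i ∈ G)).image (fun i => f (C i)) := by
      intro f
      conv_lhs => rw [← hidxG]
      rw [Finset.image_image]
      rfl
    -- pointwise expansion over rank assignments
    have expand : ∀ t, (if IsFlagF (Ms t) G ∧ G.image (rkN (Ms t)) = I ∧ Disjoint G Fl ∧
          IsFlagF (Ms t) (G ∪ Fl) then (1:ℤ) else 0)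
        = ∑ σf ∈ Fintype.piFinset (fun _ : Fin n => Finset.range (E.ncard + 1)),
            (if (Finset.univ.filter (fun i : Fin n => C i ∈ G)).image σf = I then (1:ℤ) else 0)
            * (if ∀ i, (Ms t).IsFlat (C i) ∧ rkN (Ms t) (C i) = σf i then 1 else 0) := by
      intro t
      have hME : (Ms t).E = E := hground t
      have hEt : (Ms t).E.Finite := hME.symm ▸ hE
      set σstar : Fin n → ℕ := fun i => rkN (Ms t) (C i) with hσstar
      have hmem : σstar ∈ Fintype.piFinset (fun _ : Fin n => Finset.range (E.ncard + 1)) := by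
        rw [Fintype.mem_piFinset]
        intro i
        rw [Finset.mem_range]
        show rkN (Ms t) (C i) < E.ncard + 1
        have := rkN_le_ground (M := Ms t) (X := C i) hEt
        rw [hME] at this
        omega
      rw [Finset.sum_eq_single σstar]
      · -- the main term
        have hcond : (IsFlagF (Ms t) G ∧ G.image (rkN (Ms t)) = I ∧ Disjoint G Fl ∧
            IsFlagF (Ms t) (G ∪ Fl)) ↔
            (((Finset.univ.filter (fun i : Fin n => C i ∈ G)).image σstar = I) ∧
              (∀ i, (Ms t).IsFlat (C i))) := by
          constructor
          · rintro ⟨hFlagG, hImg, hDisj, hFlagU⟩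
            constructor
            · rw [hσstar, ← himg (rkN (Ms t))]; exact hImg
            · intro i
              exact (hFlagU.1 (C i) (hCmem i)).1
          · rintro ⟨hImg, hFlats⟩
            have hFlagU : IsFlagF (Ms t) (G ∪ Fl) := by
              refine ⟨fun F hF => ?_, hc₀.2.2⟩
              obtain ⟨i, rfl⟩ := hCsurj F hF
              exact ⟨hFlats i, (hc₀.2.1 _ hF).1, by rw [hME]; exact (hc₀.2.1 _ hF).2.1⟩
            refine ⟨⟨fun F hF => hFlagU.1 F (Finset.mem_union_left _ hF),
                fun F hF F' hF' => hFlagU.2 F (Finset.mem_union_left _ hF)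
                  F' (Finset.mem_union_left _ hF')⟩, ?_, hc₀.1, hFlagU⟩
            rw [himg (rkN (Ms t))]
            exact hImg
        rw [if_congr hcond rfl rfl, ite_and_one]
        congr 1
        refine if_congr (forall_congr' fun i => ?_) rfl rfl
        rw [hσstar]
        exact (and_iff_left rfl).symm
      · intro b _ hbne
        have : ¬ ∀ i, (Ms t).IsFlat (C i) ∧ rkN (Ms t) (C i) = b i := by
          intro hcon
          refine hbne (funext fun i => ?_)
          rw [← (hcon i).2, hσstar]
        rw [if_neg this, mul_zero]
      · intro habs
        exact absurd hmem habs
    calc ∑ t, a t * (if IsFlagF (Ms t) G ∧ G.image (rkN (Ms t)) = I ∧ Disjoint G Fl ∧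
          IsFlagF (Ms t) (G ∪ Fl) then (1:ℤ) else 0)
        = ∑ t, ∑ σf ∈ Fintype.piFinset (fun _ : Fin n => Finset.range (E.ncard + 1)),
            (if (Finset.univ.filter (fun i : Fin n => C i ∈ G)).image σf = I then (1:ℤ) else 0)
            * (a t * (if ∀ i, (Ms t).IsFlat (C i) ∧ rkN (Ms t) (C i) = σf i then 1 else 0)) := by
          refine Finset.sum_congr rfl fun t _ => ?_
          rw [expand t, Finset.mul_sum]
          refine Finset.sum_congr rfl fun σf _ => ?_
          ring
      _ = ∑ σf ∈ Fintype.piFinset (fun _ : Fin n => Finset.range (E.ncard + 1)),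
            (if (Finset.univ.filter (fun i : Fin n => C i ∈ G)).image σf = I then (1:ℤ) else 0)
            * ∑ t, a t * (if ∀ i, (Ms t).IsFlat (C i) ∧ rkN (Ms t) (C i) = σf i then 1 else 0) := by
          rw [Finset.sum_comm]
          refine Finset.sum_congr rfl fun σf _ => ?_
          rw [Finset.mul_sum]
      _ = 0 := by
          refine Finset.sum_eq_zero fun σf _ => ?_
          rw [pval_flag hE hground hval n C σf hCmono.monotone hCsubE, mul_zero]
  · refine Finset.sum_eq_zero fun t _ => ?_
    rw [if_neg, mul_zero]
    rintro ⟨hFlagG, hImg, hDisj, hFlagU⟩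
    refine hc₀ ⟨hDisj, fun F hF => ?_, hFlagU.2⟩
    obtain ⟨hflat, hne, hneq⟩ := hFlagU.1 F hF
    refine ⟨hne, ?_, ?_⟩
    · rw [← hground t]; exact hneq
    · rw [← hground t]; exact hflat.subset_ground

lemma sum_Nhat_eq (hE : E.Finite) (hground : ∀ t, (Ms t).E = E)
    (hval : ∀ x : α → ℝ, ∑ t, (a t : ℝ) * Set.indicator (polytope (Ms t)) 1 x = 0)
    (Fl : Finset (Set α)) (I : Finset ℕ) :
    ∑ t, a t * Nhat (Ms t) Fl I = 0 := by
  set PE : Finset (Set α) := hE.toFinset.powerset.image (fun s : Finset α => (s : Set α)) with hPE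
  have hNhat : ∀ t, Nhat (Ms t) Fl I
      = ∑ G ∈ PE.powerset, (if IsFlagF (Ms t) G ∧ G.image (rkN (Ms t)) = I ∧ Disjoint G Fl ∧
          IsFlagF (Ms t) (G ∪ Fl) then (1:ℤ) else 0) := by
    intro t
    have hME : (Ms t).E = E := hground t
    rw [Nhat]
    by_cases hfl : ∀ F ∈ Fl, (Ms t).IsFlat F
    · rw [if_pos hfl]
      have hset : {G : Finset (Set α) | IsFlagF (Ms t) G ∧ G.image (rkN (Ms t)) = I ∧
          Disjoint G Fl ∧ IsFlagF (Ms t) (G ∪ Fl)}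
          = ↑(PE.powerset.filter (fun G => IsFlagF (Ms t) G ∧ G.image (rkN (Ms t)) = I ∧
              Disjoint G Fl ∧ IsFlagF (Ms t) (G ∪ Fl))) := by
        ext G
        simp only [Set.mem_setOf_eq, Finset.coe_filter, Finset.mem_powerset]
        constructor
        · intro h
          refine ⟨fun F hF => ?_, h⟩
          have hPF := h.1.1 F hF
          have hFE : F ⊆ E := by rw [← hME]; exact hPF.1.subset_ground
          rw [hPE, Finset.mem_image]
          refine ⟨hE.toFinset.filter (· ∈ F), Finset.mem_powerset.2 (Finset.filter_subset _ _), ?_⟩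
          ext z
          simp only [Finset.coe_filter, Set.mem_setOf_eq, Set.Finite.mem_toFinset]
          exact ⟨fun h' => h'.2, fun h' => ⟨hFE h', h'⟩⟩
        · intro h
          exact h.2
      rw [hset, Set.ncard_coe_finset, ← Finset.sum_boole]
    · rw [if_neg hfl]
      symm
      refine Finset.sum_eq_zero fun G _ => ?_
      rw [if_neg]
      rintro ⟨-, -, -, hFlagU⟩
      push_neg at hfl
      obtain ⟨F₀, hF₀, hnotflat⟩ := hfl
      exact hnotflat (hFlagU.1 F₀ (Finset.mem_union_right _ hF₀)).1
  calc ∑ t, a t * Nhat (Ms t) Fl I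
      = ∑ t, ∑ G ∈ PE.powerset, a t * (if IsFlagF (Ms t) G ∧ G.image (rkN (Ms t)) = I ∧
          Disjoint G Fl ∧ IsFlagF (Ms t) (G ∪ Fl) then (1:ℤ) else 0) := by
        refine Finset.sum_congr rfl fun t _ => ?_
        rw [hNhat t, Finset.mul_sum]
    _ = ∑ G ∈ PE.powerset, ∑ t, a t * (if IsFlagF (Ms t) G ∧ G.image (rkN (Ms t)) = I ∧
          Disjoint G Fl ∧ IsFlagF (Ms t) (G ∪ Fl) then (1:ℤ) else 0) := Finset.sum_comm
    _ = 0 := Finset.sum_eq_zero fun G _ => pval_cond hE hground hval Fl I G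

end PvalCond


/-- The flag-counting function `N̂_{𝓕,I}` is valuative on loopless matroids on a fixed finite
ground set `E`. -/
theorem stmt4 (E : Set α) (hE : E.Finite)
    (Fl : Finset (Set α)) (hFlsub : ∀ F ∈ Fl, F ⊆ E)
    (hFlchain : ∀ F ∈ Fl, ∀ G ∈ Fl, F ⊆ G ∨ G ⊆ F)
    (I : Finset ℕ) (hI : I ⊆ Finset.Icc 1 (E.ncard - 1))
    (k : ℕ) (Ms : Fin k → Matroid α) (a : Fin k → ℤ)
    (hground : ∀ t, (Ms t).E = E) (hloop : ∀ t, Loopless (Ms t))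
    (hval : ∀ x : α → ℝ,
      ∑ t, (a t : ℝ) * Set.indicator (polytope (Ms t)) 1 x = 0) :
    ∑ t, a t * Nhat (Ms t) Fl I = 0 :=
  sum_Nhat_eq hE hground hval Fl I

end ChowPaper
end

section
/- Let M be a loopless matroid of rank 3 on a finite ground set E and let ℓ ∈ A^1(M) be a nonzero combinatorially nef integral divisor class. Then there exist a positive integer a, an integer n ≥ 0, positive integers b_1,…,b_n, and distinct rank 2 flats F_1,…,F_n of M such that ℓ = a·α − ∑_{i=1}^n b_i·x_{F_i} in A^1(M). -/
open scoped Classical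
open MvPolynomial

namespace ChowPaper

variable {α : Type*}

variable (R : Type*) [CommRing R]

-- closure is a flat
lemma flat_closure (M : Matroid α) (X : Set α) : M.IsFlat (M.closure X) :=
  ⟨fun _ _ hIF hIY => hIY.subset_closure.trans
      (by rw [hIF.closure_eq_closure, Matroid.closure_closure]),
    M.closure_subset_ground X⟩

section rk

variable {M : Matroid α} (hfin : M.E.Finite)

def rkSet (M : Matroid α) (X : Set α) : Set ℕ :=
  {n : ℕ | ∃ I, M.Indep I ∧ I ⊆ X ∧ I.ncard = n}

lemma rkN_def (X : Set α) : rkN M X = sSup (rkSet M X) := rfl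

lemma rkSet_nonempty (X : Set α) : (rkSet M X).Nonempty :=
  ⟨0, ∅, M.empty_indep, Set.empty_subset X, Set.ncard_empty α⟩

include hfin in
lemma rkSet_bddAbove (X : Set α) : BddAbove (rkSet M X) := by
  refine ⟨M.E.ncard, fun n hn => ?_⟩
  obtain ⟨I, hI, -, rfl⟩ := hn
  exact Set.ncard_le_ncard hI.subset_ground hfin

include hfin in
lemma mem_rkSet_le {X : Set α} {n : ℕ} (h : n ∈ rkSet M X) : n ≤ rkN M X :=
  le_csSup (rkSet_bddAbove hfin X) h

include hfin in
lemma rkN_eq_of_basis' {I X : Set α} (hI : M.IsBasis' I X) : rkN M X = I.ncard := by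
  refine le_antisymm (csSup_le (rkSet_nonempty X) ?_)
    (mem_rkSet_le hfin ⟨I, hI.indep, hI.subset, rfl⟩)
  rintro n ⟨J, hJ, hJX, rfl⟩
  obtain ⟨I', hI', hJI'⟩ := hJ.subset_isBasis'_of_subset hJX
  have hcard : J.encard ≤ I.encard :=
    (Set.encard_le_encard hJI').trans_eq (hI'.encard_eq_encard hI)
  have hIfin : I.Finite := hfin.subset hI.indep.subset_ground
  rw [Set.ncard, Set.ncard]
  exact ENat.toNat_le_toNat hcard hIfin.encard_lt_top.ne

include hfin in
lemma rkN_mono_s6 {X Y : Set α} (h : X ⊆ Y) : rkN M X ≤ rkN M Y := by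
  refine csSup_le (rkSet_nonempty X) fun n hn => ?_
  obtain ⟨I, hI, hIX, rfl⟩ := hn
  exact mem_rkSet_le hfin ⟨I, hI, hIX.trans h, rfl⟩

include hfin in
lemma rkN_closure_singleton {j : α} (hj : M.Indep {j}) : rkN M (M.closure {j}) = 1 := by
  rw [rkN_eq_of_basis' hfin hj.isBasis_closure.isBasis', Set.ncard_singleton]

include hfin in
lemma rkN_nonempty_flat_pos {F : Set α} (hloop : Loopless M) (hF : M.IsFlat F)
    (hne : F.Nonempty) : 1 ≤ rkN M F := by
  obtain ⟨a, ha⟩ := hne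
  exact mem_rkSet_le hfin ⟨{a}, hloop a (hF.subset_ground ha),
    Set.singleton_subset_iff.2 ha, Set.ncard_singleton a⟩

include hfin in
/-- uniqueness of the rank-1 flat containing `j`. -/
lemma rank_one_flat_eq {G : Set α} {j : α} (hloop : Loopless M) (hG : M.IsFlat G) (hG1 : rkN M G = 1)
    (hj : j ∈ G) : G = M.closure {j} := by
  have hjE : j ∈ M.E := hG.subset_ground hj
  refine le_antisymm ?_ ?_
  · intro x hx
    by_contra hxj
    have hxcl : x ∉ M.closure {j} := hxj
    have hjind : M.Indep {j} := hloop j hjE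
    have hxj' : x ≠ j := fun h => hxcl (h ▸ M.mem_closure_self j hjE)
    have hins : M.Indep (insert x {j}) := by
      rw [hjind.insert_indep_iff_of_notMem (by simpa using hxj')]
      exact ⟨hG.subset_ground hx, hxcl⟩
    have h2 : ({x, j} : Set α).ncard = 2 := Set.ncard_pair hxj'
    have := mem_rkSet_le hfin (M := M) (X := G)
      ⟨{x, j}, hins, by rw [Set.insert_subset_iff, Set.singleton_subset_iff]; exact ⟨hx, hj⟩, h2⟩
    omega
  · have : M.closure {j} ⊆ M.closure G := M.closure_subset_closure (by simpa using hj)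
    rwa [hG.closure] at this

include hfin in
lemma flat_eq_ground_of_rkN_ge {F : Set α} (hF : M.IsFlat F) (hr : rkN M M.E = 3)
    (h3 : 3 ≤ rkN M F) : F = M.E := by
  rw [rkN_def] at h3
  obtain ⟨I, hI, hIF, hIcard⟩ :=
    Nat.sSup_mem (rkSet_nonempty (M := M) F) (rkSet_bddAbove hfin F)
  have hIfin : I.Finite := hfin.subset hI.subset_ground
  refine subset_antisymm hF.subset_ground fun x hx => ?_
  have hxcl : x ∈ M.closure I := by
    by_contra hxcl
    have hxI : x ∉ I := fun h => hxcl (M.subset_closure I hI.subset_ground h)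
    have hins : M.Indep (insert x I) := by
      rw [hI.insert_indep_iff_of_notMem hxI]; exact ⟨hx, hxcl⟩
    have hle := mem_rkSet_le hfin (M := M) (X := M.E)
      ⟨insert x I, hins, hins.subset_ground, rfl⟩
    rw [Set.ncard_insert_of_notMem hxI hIfin, hIcard] at hle
    omega
  have : M.closure I ⊆ F := by
    have h1 : M.closure I ⊆ M.closure F := M.closure_subset_closure hIF
    rwa [hF.closure] at h1
  exact this hxcl

include hfin in
lemma rkN_pflat_mem {F : Set α} (hloop : Loopless M) (hr : rkN M M.E = 3)
    (hF : PFlat M F) : rkN M F = 1 ∨ rkN M F = 2 := by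
  have h1 := rkN_nonempty_flat_pos hfin hloop hF.1 hF.2.1
  have hle : rkN M F ≤ 3 := hr ▸ rkN_mono_s6 hfin hF.1.subset_ground
  have hne : rkN M F ≠ 3 := fun h =>
    hF.2.2 (flat_eq_ground_of_rkN_ge hfin hF.1 hr h.ge)
  omega

end rk

section algebraAux

variable {M : Matroid α}

lemma cmk_eq (M : Matroid α) : cmk ℝ M = Ideal.Quotient.mk (chowIdeal ℝ M) := rfl

/-- The linear generators of the Chow ideal. -/
def Lset (M : Matroid α) : Set (Pre ℝ M) :=
  {p | ∃ i ∈ M.E, ∃ j ∈ M.E, p = alphaPre ℝ M i - alphaPre ℝ M j}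

variable [Fintype (FlatIdx M)]

noncomputable def toPoly (M : Matroid α) [Fintype (FlatIdx M)] (c : FlatIdx M → ℝ) : Pre ℝ M :=
  ∑ F, MvPolynomial.C (c F) * X F

lemma lin_eq_toPoly (c : FlatIdx M → ℝ) : lin ℝ M c = cmk ℝ M (toPoly M c) := by
  rw [lin, toPoly, finsum_eq_sum_of_fintype]

lemma alphaPre_eq (i : α) :
    alphaPre ℝ M i = toPoly M (fun F => if i ∈ F.1 then 1 else 0) := by
  rw [alphaPre, finsum_eq_sum_of_fintype, toPoly]
  refine Finset.sum_congr rfl fun F _ => ?_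
  by_cases h : i ∈ F.1 <;> simp [h]

lemma toPoly_hom (c : FlatIdx M → ℝ) : (toPoly M c).IsHomogeneous 1 := by
  refine MvPolynomial.IsHomogeneous.sum _ _ _ fun F _ => ?_
  simpa using (MvPolynomial.isHomogeneous_C (FlatIdx M) (c F)).mul
    (MvPolynomial.isHomogeneous_X ℝ F)

lemma coeff_toPoly (c : FlatIdx M → ℝ) (F : FlatIdx M) :
    MvPolynomial.coeff (Finsupp.single F 1) (toPoly M c) = c F := by
  rw [toPoly, MvPolynomial.coeff_sum, Finset.sum_eq_single F]
  · rw [MvPolynomial.coeff_C_mul, MvPolynomial.coeff_X]; simp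
  · intro G _ hGF
    rw [MvPolynomial.coeff_C_mul, MvPolynomial.coeff_X', if_neg, mul_zero]
    exact fun h => hGF ((Finsupp.single_left_inj one_ne_zero).1 h)
  · simp

/-- Coefficient-extraction functional. -/
noncomputable def Psi (M : Matroid α) [Fintype (FlatIdx M)] (w : FlatIdx M → ℝ)
    (p : Pre ℝ M) : ℝ :=
  ∑ F, w F * MvPolynomial.coeff (Finsupp.single F 1) p

lemma Psi_toPoly (w c : FlatIdx M → ℝ) : Psi M w (toPoly M c) = ∑ F, w F * c F :=
  Finset.sum_congr rfl fun F _ => by rw [coeff_toPoly]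

lemma Psi_sub (w : FlatIdx M → ℝ) (p q : Pre ℝ M) :
    Psi M w (p - q) = Psi M w p - Psi M w q := by
  simp [Psi, MvPolynomial.coeff_sub, mul_sub, Finset.sum_sub_distrib]

lemma Psi_add (w : FlatIdx M → ℝ) (p q : Pre ℝ M) :
    Psi M w (p + q) = Psi M w p + Psi M w q := by
  simp [Psi, MvPolynomial.coeff_add, mul_add, Finset.sum_add_distrib]

lemma Psi_smul (w : FlatIdx M → ℝ) (a : ℝ) (p : Pre ℝ M) :
    Psi M w (a • p) = a * Psi M w p := by
  simp [Psi, MvPolynomial.coeff_smul, Finset.mul_sum, mul_left_comm, smul_eq_mul]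

lemma Psi_span (w : FlatIdx M → ℝ) (hw : ∀ p ∈ Lset M, Psi M w p = 0) :
    ∀ p ∈ Submodule.span ℝ (Lset M), Psi M w p = 0 := by
  intro p hp
  induction hp using Submodule.span_induction with
  | mem x hx => exact hw x hx
  | zero => simp [Psi]
  | add x y hx hy ihx ihy => rw [Psi_add, ihx, ihy, add_zero]
  | smul a x hx ih => rw [Psi_smul, ih, mul_zero]

lemma comp1_mul_deg2 (r g : Pre ℝ M) (hg : g.IsHomogeneous 2) :
    homogeneousComponent 1 (r * g) = 0 := by
  conv_lhs => rw [← MvPolynomial.sum_homogeneousComponent r]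
  rw [Finset.sum_mul, map_sum]
  refine Finset.sum_eq_zero fun d _ => ?_
  have h : (homogeneousComponent d r * g).IsHomogeneous (d + 2) :=
    (MvPolynomial.homogeneousComponent_isHomogeneous d r).mul hg
  rw [MvPolynomial.homogeneousComponent_of_mem
    ((MvPolynomial.mem_homogeneousSubmodule _ _).2 h), if_neg (by omega)]

lemma comp1_mul_deg1 (r g : Pre ℝ M) (hg : g.IsHomogeneous 1) :
    homogeneousComponent 1 (r * g) = MvPolynomial.C (MvPolynomial.coeff 0 r) * g := by
  conv_lhs => rw [← MvPolynomial.sum_homogeneousComponent r]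
  rw [Finset.sum_mul, map_sum, Finset.sum_eq_single 0]
  · have h : (homogeneousComponent 0 r * g).IsHomogeneous (0 + 1) :=
      (MvPolynomial.homogeneousComponent_isHomogeneous 0 r).mul hg
    rw [MvPolynomial.homogeneousComponent_of_mem
      ((MvPolynomial.mem_homogeneousSubmodule _ _).2 h), if_pos (by omega),
      MvPolynomial.homogeneousComponent_zero]
  · intro d _ hd
    have h : (homogeneousComponent d r * g).IsHomogeneous (d + 1) :=
      (MvPolynomial.homogeneousComponent_isHomogeneous d r).mul hg
    rw [MvPolynomial.homogeneousComponent_of_mem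
      ((MvPolynomial.mem_homogeneousSubmodule _ _).2 h), if_neg (by omega)]
  · intro h
    exact absurd (Finset.mem_range.2 (Nat.succ_pos _)) h

lemma mem_span_Lset {p : Pre ℝ M} (hp : p ∈ chowIdeal ℝ M) (h1 : p.IsHomogeneous 1) :
    p ∈ Submodule.span ℝ (Lset M) := by
  have key : ∀ q ∈ chowIdeal ℝ M, ∀ r : Pre ℝ M,
      homogeneousComponent 1 (r * q) ∈ Submodule.span ℝ (Lset M) := by
    intro q hq
    induction hq using Submodule.span_induction with
    | mem x hx =>
      intro r
      rcases hx with h | h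
      · obtain ⟨F, G, -, -, rfl⟩ := h
        rw [comp1_mul_deg2 _ _ (by simpa using
          (MvPolynomial.isHomogeneous_X ℝ F).mul (MvPolynomial.isHomogeneous_X ℝ G))]
        exact Submodule.zero_mem _
      · obtain ⟨i, hi, j, hj, rfl⟩ := h
        have hg : (alphaPre ℝ M i - alphaPre ℝ M j).IsHomogeneous 1 := by
          rw [alphaPre_eq (M := M) i, alphaPre_eq (M := M) j]
          exact (toPoly_hom _).sub (toPoly_hom _)
        rw [comp1_mul_deg1 _ _ hg, ← MvPolynomial.smul_eq_C_mul]
        exact Submodule.smul_mem _ _ (Submodule.subset_span ⟨i, hi, j, hj, rfl⟩)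
    | zero => intro r; rw [mul_zero, map_zero]; exact Submodule.zero_mem _
    | add x y hx hy ihx ihy =>
      intro r
      rw [mul_add, map_add]
      exact Submodule.add_mem _ (ihx r) (ihy r)
    | smul a x hx ih =>
      intro r
      rw [smul_eq_mul, ← mul_assoc]
      exact ih (r * a)
  have h := key p hp 1
  rwa [one_mul, MvPolynomial.homogeneousComponent_of_mem
    ((MvPolynomial.mem_homogeneousSubmodule _ _).2 h1), if_pos rfl] at h

lemma sum_w_eq_of_lin_eq {c c' : FlatIdx M → ℝ} (h : lin ℝ M c = lin ℝ M c')
    {w : FlatIdx M → ℝ} (hw : ∀ p ∈ Lset M, Psi M w p = 0) :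
    ∑ F, w F * c F = ∑ F, w F * c' F := by
  have h0 : cmk ℝ M (toPoly M c - toPoly M c') = 0 := by
    rw [map_sub, ← lin_eq_toPoly, ← lin_eq_toPoly, h, sub_self]
  rw [cmk_eq] at h0
  have hmem : toPoly M c - toPoly M c' ∈ chowIdeal ℝ M :=
    (Ideal.Quotient.eq_zero_iff_mem).1 h0
  have hspan := mem_span_Lset hmem ((toPoly_hom c).sub (toPoly_hom c'))
  have h0' := Psi_span w hw _ hspan
  rw [Psi_sub, Psi_toPoly, Psi_toPoly, sub_eq_zero] at h0'
  exact h0'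

lemma cmk_smul (a : ℝ) (p : Pre ℝ M) : cmk ℝ M (a • p) = a • cmk ℝ M p := by
  rw [cmk_eq, ← Ideal.Quotient.mkₐ_eq_mk ℝ, map_smul]

lemma lin_smul_sum (c : FlatIdx M → ℝ) :
    lin ℝ M c = ∑ F, c F • xcls ℝ M F := by
  rw [lin_eq_toPoly, toPoly, map_sum]
  refine Finset.sum_congr rfl fun F _ => ?_
  rw [← MvPolynomial.smul_eq_C_mul, cmk_smul, xcls]

lemma alpha_lin (j : α) :
    alpha ℝ M j = lin ℝ M (fun F => if j ∈ F.1 then 1 else 0) := by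
  rw [alpha, alphaPre_eq, lin_eq_toPoly]

lemma alpha_const {i j : α} (hi : i ∈ M.E) (hj : j ∈ M.E) :
    alpha ℝ M i = alpha ℝ M j := by
  rw [← sub_eq_zero, alpha, alpha, ← map_sub, cmk_eq, Ideal.Quotient.eq_zero_iff_mem]
  exact Ideal.subset_span (Or.inr ⟨i, hi, j, hj, rfl⟩)

end algebraAux


section combAux

variable {M : Matroid α} [Fintype (FlatIdx M)]
variable (hfin : M.E.Finite) (hloop : Loopless M) (hr : rkN M M.E = 3)

include hfin hloop hr in
lemma pflat_closure_singleton {j : α} (hj : j ∈ M.E) : PFlat M (M.closure {j}) := by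
  refine ⟨flat_closure M {j}, ⟨j, M.mem_closure_self j hj⟩, fun h => ?_⟩
  have h1 := rkN_closure_singleton hfin (hloop j hj)
  rw [h, hr] at h1
  omega

include hfin hloop in
lemma rk1_iff {j : α} (hj : j ∈ M.E) (F : FlatIdx M) :
    (rkN M F.1 = 1 ∧ j ∈ F.1) ↔ F.1 = M.closure {j} := by
  constructor
  · rintro ⟨h1, hjF⟩
    exact rank_one_flat_eq hfin hloop F.2.1 h1 hjF
  · rintro h
    rw [h]
    exact ⟨rkN_closure_singleton hfin (hloop j hj), M.mem_closure_self j hj⟩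

lemma mem_iff_closure_subset {j : α} (hj : j ∈ M.E) (F : FlatIdx M) :
    j ∈ F.1 ↔ M.closure {j} ⊆ F.1 := by
  constructor
  · intro h
    have h1 := M.closure_subset_closure (Set.singleton_subset_iff.2 h)
    rwa [F.2.1.closure] at h1
  · intro h
    exact h (M.mem_closure_self j hj)

include hfin hloop hr in
lemma mem_iff_cases {j : α} (hj : j ∈ M.E) (F : FlatIdx M) :
    j ∈ F.1 ↔ (F.1 = M.closure {j} ∨ (rkN M F.1 = 2 ∧ M.closure {j} ⊆ F.1)) := by
  constructor
  · intro h
    rcases rkN_pflat_mem hfin hloop hr F.2 with h1 | h2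
    · exact Or.inl ((rk1_iff hfin hloop hj F).1 ⟨h1, h⟩)
    · exact Or.inr ⟨h2, (mem_iff_closure_subset hj F).1 h⟩
  · rintro (h | ⟨-, h⟩)
    · rw [h]; exact M.mem_closure_self j hj
    · exact (mem_iff_closure_subset hj F).2 h

/-- The rank-1 proper flats. -/
noncomputable def R1 (M : Matroid α) [Fintype (FlatIdx M)] : Finset (FlatIdx M) :=
  Finset.univ.filter fun F : FlatIdx M => rkN M F.1 = 1

/-- The rank-2 proper flats. -/
noncomputable def R2 (M : Matroid α) [Fintype (FlatIdx M)] : Finset (FlatIdx M) :=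
  Finset.univ.filter fun F : FlatIdx M => rkN M F.1 = 2

include hfin hloop hr in
lemma alpha_decomp {i : α} (hi : i ∈ M.E) {G : FlatIdx M} (hG1 : rkN M G.1 = 1) :
    alpha ℝ M i = xcls ℝ M G
      + ∑ F ∈ (R2 M).filter (fun F => G.1 ⊆ F.1), xcls ℝ M F := by
  obtain ⟨j, hjG⟩ := G.2.2.1
  have hjE : j ∈ M.E := G.2.1.subset_ground hjG
  have hGj : G.1 = M.closure {j} := rank_one_flat_eq hfin hloop G.2.1 hG1 hjG
  have hsum : alpha ℝ M i = ∑ F ∈ Finset.univ.filter (fun F : FlatIdx M => j ∈ F.1),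
      xcls ℝ M F := by
    rw [alpha_const hi hjE, alpha_lin, lin_smul_sum, Finset.sum_filter]
    refine Finset.sum_congr rfl fun F _ => ?_
    by_cases h : j ∈ F.1 <;> simp [h]
  rw [hsum]
  have hset : Finset.univ.filter (fun F : FlatIdx M => j ∈ F.1)
      = insert G ((R2 M).filter (fun F => G.1 ⊆ F.1)) := by
    ext F
    simp only [Finset.mem_filter, Finset.mem_univ, true_and, Finset.mem_insert, R2]
    rw [mem_iff_cases hfin hloop hr hjE F, ← hGj]
    constructor
    · rintro (h | ⟨h2, hsub⟩)
      · exact Or.inl (Subtype.ext h)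
      · exact Or.inr ⟨h2, hsub⟩
    · rintro (rfl | ⟨h2, hsub⟩)
      · exact Or.inl rfl
      · exact Or.inr ⟨h2, hsub⟩
  rw [hset, Finset.sum_insert (by
    simp only [Finset.mem_filter, R2, Finset.mem_univ, true_and]
    rintro ⟨h2, -⟩
    omega)]

include hfin hloop hr in
lemma lin_repr {i : α} (hi : i ∈ M.E) (c : FlatIdx M → ℝ) :
    lin ℝ M c = (∑ G ∈ R1 M, c G) • alpha ℝ M i
      - ∑ F ∈ R2 M, ((∑ G ∈ (R1 M).filter (fun G => G.1 ⊆ F.1), c G) - c F) • xcls ℝ M F := by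
  have hA : (∑ G ∈ R1 M, c G) • alpha ℝ M i
      = ∑ G ∈ R1 M, (c G • xcls ℝ M G
          + ∑ F ∈ (R2 M).filter (fun F => G.1 ⊆ F.1), c G • xcls ℝ M F) := by
    rw [Finset.sum_smul]
    refine Finset.sum_congr rfl fun G hG => ?_
    rw [alpha_decomp hfin hloop hr hi (Finset.mem_filter.1 hG).2, smul_add, Finset.smul_sum]
  have hswap : ∑ G ∈ R1 M, ∑ F ∈ (R2 M).filter (fun F => G.1 ⊆ F.1), c G • xcls ℝ M F
      = ∑ F ∈ R2 M, (∑ G ∈ (R1 M).filter (fun G => G.1 ⊆ F.1), c G) • xcls ℝ M F := by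
    have h1 : ∀ G ∈ R1 M, ∑ F ∈ (R2 M).filter (fun F => G.1 ⊆ F.1), c G • xcls ℝ M F
        = ∑ F ∈ R2 M, if G.1 ⊆ F.1 then c G • xcls ℝ M F else 0 :=
      fun G _ => (Finset.sum_filter _ _)
    rw [Finset.sum_congr rfl h1, Finset.sum_comm]
    refine Finset.sum_congr rfl fun F _ => ?_
    rw [Finset.sum_smul, Finset.sum_filter]
  rw [hA, Finset.sum_add_distrib, hswap]
  have hcomb : ∀ F ∈ R2 M,
      ((∑ G ∈ (R1 M).filter (fun G => G.1 ⊆ F.1), c G) • xcls ℝ M F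
        - ((∑ G ∈ (R1 M).filter (fun G => G.1 ⊆ F.1), c G) - c F) • xcls ℝ M F)
      = c F • xcls ℝ M F := fun F _ => by rw [← sub_smul, sub_sub_cancel]
  rw [add_sub_assoc, ← Finset.sum_sub_distrib, Finset.sum_congr rfl hcomb, lin_smul_sum,
    ← Finset.sum_filter_add_sum_filter_not Finset.univ
      (fun F : FlatIdx M => rkN M F.1 = 1) (fun F => c F • xcls ℝ M F)]
  have h2 : Finset.filter (fun x : FlatIdx M => ¬rkN M x.1 = 1) Finset.univ = R2 M := by
    ext F
    simp only [Finset.mem_filter, Finset.mem_univ, true_and, R2]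
    rcases rkN_pflat_mem hfin hloop hr F.2 with h | h <;> simp [h]
  rw [h2]
  rfl


end combAux


section funcAux

variable {M : Matroid α} [Fintype (FlatIdx M)]
variable (hfin : M.E.Finite) (hloop : Loopless M) (hr : rkN M M.E = 3)

/-- Weight extracting the `α`-coefficient. -/
noncomputable def wA (M : Matroid α) : FlatIdx M → ℝ :=
  fun F => if rkN M F.1 = 1 then 1 else 0

include hfin hloop hr in
lemma Psi_wA_alphaPre {j : α} (hj : j ∈ M.E) : Psi M (wA M) (alphaPre ℝ M j) = 1 := by
  set Gj : FlatIdx M := ⟨M.closure {j}, pflat_closure_singleton hfin hloop hr hj⟩ with hGj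
  rw [alphaPre_eq, Psi_toPoly]
  have hkey : ∀ F : FlatIdx M,
      wA M F * (if j ∈ F.1 then (1:ℝ) else 0) = if F = Gj then 1 else 0 := by
    intro F
    have hiff : (rkN M F.1 = 1 ∧ j ∈ F.1) ↔ F = Gj := by
      rw [rk1_iff hfin hloop hj F]
      exact ⟨fun h => Subtype.ext h, fun h => congrArg Subtype.val h⟩
    by_cases h : F = Gj
    · simp only [wA]
      rw [if_pos (hiff.2 h).1, if_pos (hiff.2 h).2, if_pos h, one_mul]
    · have hno : ¬(rkN M F.1 = 1 ∧ j ∈ F.1) := fun hc => h (hiff.1 hc)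
      by_cases h1 : rkN M F.1 = 1
      · have h2 : j ∉ F.1 := fun h2 => hno ⟨h1, h2⟩
        simp [wA, h1, h2, h]
      · simp [wA, h1, h]
  rw [Finset.sum_congr rfl fun F _ => hkey F, Finset.sum_ite_eq' Finset.univ,
    if_pos (Finset.mem_univ _)]

include hfin hloop hr in
lemma wA_valid : ∀ p ∈ Lset M, Psi M (wA M) p = 0 := by
  rintro p ⟨i, hi, j, hj, rfl⟩
  rw [Psi_sub, Psi_wA_alphaPre hfin hloop hr hi, Psi_wA_alphaPre hfin hloop hr hj, sub_self]

lemma sum_wA (c : FlatIdx M → ℝ) : ∑ F, wA M F * c F = ∑ G ∈ R1 M, c G := by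
  rw [R1, Finset.sum_filter]
  refine Finset.sum_congr rfl fun F _ => ?_
  by_cases h : rkN M F.1 = 1 <;> simp [wA, h]

include hfin hloop hr in
lemma A_eq {c c' : FlatIdx M → ℝ} (h : lin ℝ M c = lin ℝ M c') :
    ∑ G ∈ R1 M, c G = ∑ G ∈ R1 M, c' G := by
  rw [← sum_wA, ← sum_wA]
  exact sum_w_eq_of_lin_eq h (wA_valid hfin hloop hr)

/-- Weight extracting (minus) the `x_{F_0}`-coefficient. -/
noncomputable def wB (M : Matroid α) [Fintype (FlatIdx M)] (F0 : FlatIdx M) :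
    FlatIdx M → ℝ :=
  fun G => (if rkN M G.1 = 1 ∧ G.1 ⊆ F0.1 then 1 else 0) - (if G = F0 then 1 else 0)

include hfin hloop hr in
lemma Psi_wB_alphaPre (F0 : FlatIdx M) {j : α} (hj : j ∈ M.E) :
    Psi M (wB M F0) (alphaPre ℝ M j) = 0 := by
  set Gj : FlatIdx M := ⟨M.closure {j}, pflat_closure_singleton hfin hloop hr hj⟩ with hGj
  set z : ℝ := if j ∈ F0.1 then 1 else 0 with hz
  rw [alphaPre_eq, Psi_toPoly]
  have hkey : ∀ F : FlatIdx M,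
      wB M F0 F * (if j ∈ F.1 then (1:ℝ) else 0)
        = (if F = Gj then z else 0) - (if F = F0 then z else 0) := by
    intro F
    rw [wB, sub_mul]
    congr 1
    · -- first part
      have hiff : (rkN M F.1 = 1 ∧ j ∈ F.1) ↔ F = Gj := by
        rw [rk1_iff hfin hloop hj F]
        exact ⟨fun h => Subtype.ext h, fun h => congrArg Subtype.val h⟩
      by_cases h : F = Gj
      · have h1 := (hiff.2 h).1
        have h2 := (hiff.2 h).2
        have hsub : F.1 ⊆ F0.1 ↔ j ∈ F0.1 := by
          rw [h]
          exact (mem_iff_closure_subset hj F0).symm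
        by_cases h3 : j ∈ F0.1
        · rw [if_pos ⟨h1, hsub.2 h3⟩, if_pos h2, if_pos h, one_mul, hz, if_pos h3]
        · have hns : ¬ F.1 ⊆ F0.1 := fun hc => h3 (hsub.1 hc)
          rw [if_neg (fun hc => hns (And.right hc)), zero_mul, if_pos h, hz, if_neg h3]
      · have hno : ¬(rkN M F.1 = 1 ∧ j ∈ F.1) := fun hc => h (hiff.1 hc)
        by_cases h1 : rkN M F.1 = 1 ∧ F.1 ⊆ F0.1
        · have h2 : j ∉ F.1 := fun h2 => hno ⟨h1.1, h2⟩
          simp [h1, h2, h]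
        · simp [h1, h]
    · -- second part
      by_cases h : F = F0
      · rw [if_pos h, one_mul, if_pos h, hz, h]
      · simp [h]
  rw [Finset.sum_congr rfl fun F _ => hkey F, Finset.sum_sub_distrib,
    Finset.sum_ite_eq' Finset.univ, Finset.sum_ite_eq' Finset.univ,
    if_pos (Finset.mem_univ _), if_pos (Finset.mem_univ _), sub_self]

include hfin hloop hr in
lemma wB_valid (F0 : FlatIdx M) : ∀ p ∈ Lset M, Psi M (wB M F0) p = 0 := by
  rintro p ⟨i, hi, j, hj, rfl⟩
  rw [Psi_sub, Psi_wB_alphaPre hfin hloop hr F0 hi, Psi_wB_alphaPre hfin hloop hr F0 hj,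
    sub_self]

lemma sum_wB (F0 : FlatIdx M) (c : FlatIdx M → ℝ) :
    ∑ F, wB M F0 F * c F
      = (∑ G ∈ (R1 M).filter (fun G => G.1 ⊆ F0.1), c G) - c F0 := by
  have h1 : ∀ F : FlatIdx M, wB M F0 F * c F
      = (if rkN M F.1 = 1 ∧ F.1 ⊆ F0.1 then c F else 0) - (if F = F0 then c F else 0) := by
    intro F
    rw [wB, sub_mul]
    congr 1
    · by_cases h : rkN M F.1 = 1 ∧ F.1 ⊆ F0.1 <;> simp [h]
    · by_cases h : F = F0 <;> simp [h]
  rw [Finset.sum_congr rfl fun F _ => h1 F, Finset.sum_sub_distrib]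
  congr 1
  · rw [← Finset.sum_filter, R1, Finset.filter_filter]
  · rw [Finset.sum_ite_eq' Finset.univ, if_pos (Finset.mem_univ _)]

include hfin hloop hr in
lemma B_eq (F0 : FlatIdx M) {c c' : FlatIdx M → ℝ} (h : lin ℝ M c = lin ℝ M c') :
    (∑ G ∈ (R1 M).filter (fun G => G.1 ⊆ F0.1), c G) - c F0
      = (∑ G ∈ (R1 M).filter (fun G => G.1 ⊆ F0.1), c' G) - c' F0 := by
  rw [← sum_wB, ← sum_wB]
  exact sum_w_eq_of_lin_eq h (wB_valid hfin hloop hr F0)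

end funcAux


/-- Every nonzero combinatorially nef integral divisor class on a rank-3 matroid can be written
as `a·α - ∑ bᵢ·x_{Fᵢ}` with `a, bᵢ` positive integers and `Fᵢ` distinct rank-2 flats. -/
theorem stmt6 (M : Matroid α) (hfin : M.E.Finite) (hloop : Loopless M)
    (hr : rkN M M.E = 3) (i : α) (hi : i ∈ M.E)
    (ℓ : Chow ℝ M) (hint : ∃ m : FlatIdx M → ℤ, ℓ = lin ℝ M fun F => (m F : ℝ))
    (hnef : CombNef M ℓ) (hne : ℓ ≠ 0) :
    ∃ (a : ℤ) (n : ℕ) (b : Fin n → ℤ) (F : Fin n → FlatIdx M),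
      0 < a ∧ (∀ t, 0 < b t) ∧ Function.Injective F ∧ (∀ t, rkN M (F t).1 = 2) ∧
      ℓ = (a : ℝ) • alpha ℝ M i - ∑ t, (b t : ℝ) • xcls ℝ M (F t) := by
  haveI : Fintype (FlatIdx M) :=
    Set.Finite.fintype (hfin.finite_subsets.subset
      (fun F (hF : PFlat M F) => hF.1.subset_ground))
  obtain ⟨m, hm⟩ := hint
  set mc : FlatIdx M → ℝ := fun F => (m F : ℝ) with hmc
  -- apply nefness to the empty flag
  obtain ⟨c, hc, -, hcpos'⟩ := hnef ∅ (fun F hF => absurd hF (Finset.notMem_empty F))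
  have hcpos : ∀ F, 0 ≤ c F := fun F =>
    hcpos' F (Finset.notMem_empty F) (fun G hG => absurd hG (Finset.notMem_empty G))
  have hlin_cm : lin ℝ M mc = lin ℝ M c := by rw [← hm, ← hc]
  set aZ : ℤ := ∑ G ∈ R1 M, m G with haZ
  have haR : (aZ : ℝ) = ∑ G ∈ R1 M, c G := by
    rw [← A_eq hfin hloop hr hlin_cm, haZ]
    push_cast
    rfl
  set bZ : FlatIdx M → ℤ :=
    fun F => (∑ G ∈ (R1 M).filter (fun G => G.1 ⊆ F.1), m G) - m F with hbZ
  have hbR : ∀ F : FlatIdx M,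
      (bZ F : ℝ) = (∑ G ∈ (R1 M).filter (fun G => G.1 ⊆ F.1), mc G) - mc F := by
    intro F
    rw [hbZ]
    push_cast
    rfl
  have hbnonneg : ∀ F0 ∈ R2 M, 0 ≤ bZ F0 := by
    intro F0 hF0
    have hF02 : rkN M F0.1 = 2 := (Finset.mem_filter.1 hF0).2
    obtain ⟨cF, hcF, hzero, hpos⟩ := hnef {F0} (by
      intro F hF G hG
      rw [Finset.mem_singleton] at hF hG
      rw [hF, hG]
      exact Or.inl subset_rfl)
    have hlin2 : lin ℝ M mc = lin ℝ M cF := by rw [← hm, ← hcF]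
    have hB := B_eq hfin hloop hr F0 hlin2
    have hbr : (bZ F0 : ℝ)
        = (∑ G ∈ (R1 M).filter (fun G => G.1 ⊆ F0.1), cF G) - cF F0 := by
      rw [hbR F0, hB]
    have hcF0 : cF F0 = 0 := hzero F0 (Finset.mem_singleton_self F0)
    have hterm : ∀ G ∈ (R1 M).filter (fun G => G.1 ⊆ F0.1), 0 ≤ cF G := by
      intro G hG
      rw [Finset.mem_filter, R1, Finset.mem_filter] at hG
      have hG1 : rkN M G.1 = 1 := hG.1.2
      have hGF0 : G ≠ F0 := fun h => by rw [h, hF02] at hG1; omega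
      refine hpos G (fun h => hGF0 (Finset.mem_singleton.1 h)) (fun H hH => ?_)
      rw [Finset.mem_singleton.1 hH]
      exact Or.inl hG.2
    have : (0:ℝ) ≤ (bZ F0 : ℝ) := by
      rw [hbr, hcF0, sub_zero]
      exact Finset.sum_nonneg hterm
    exact_mod_cast this
  have haZnonneg : 0 ≤ aZ := by
    have : (0:ℝ) ≤ (aZ : ℝ) := by
      rw [haR]
      exact Finset.sum_nonneg fun G _ => hcpos G
    exact_mod_cast this
  have haZpos : 0 < aZ := by
    rcases haZnonneg.lt_or_eq with h | h
    · exact h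
    · exfalso
      apply hne
      have hceq0 : ∀ G ∈ R1 M, c G = 0 :=
        (Finset.sum_eq_zero_iff_of_nonneg (fun G _ => hcpos G)).1
          (by rw [← haR, ← h, Int.cast_zero])
      have hc2 : ∀ F0 ∈ R2 M, c F0 = 0 := by
        intro F0 hF0
        have hB := B_eq hfin hloop hr F0 hlin_cm
        have hsum0 : ∑ G ∈ (R1 M).filter (fun G => G.1 ⊆ F0.1), c G = 0 :=
          Finset.sum_eq_zero fun G hG => hceq0 G (Finset.mem_of_mem_filter G hG)
        have h1 : (bZ F0 : ℝ) = - c F0 := by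
          rw [hbR F0, hB, hsum0, zero_sub]
        have h2 : (0:ℝ) ≤ (bZ F0 : ℝ) := by exact_mod_cast hbnonneg F0 hF0
        have h3 := hcpos F0
        linarith [h1 ▸ h2]
      have hall : ∀ F : FlatIdx M, c F = 0 := by
        intro F
        rcases rkN_pflat_mem hfin hloop hr F.2 with hF1 | hF2
        · exact hceq0 F (Finset.mem_filter.2 ⟨Finset.mem_univ _, hF1⟩)
        · exact hc2 F (Finset.mem_filter.2 ⟨Finset.mem_univ _, hF2⟩)
      rw [hc, lin_smul_sum]
      exact Finset.sum_eq_zero fun F _ => by rw [hall F, zero_smul]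
  have hrepr : ℓ = (aZ : ℝ) • alpha ℝ M i - ∑ F ∈ R2 M, (bZ F : ℝ) • xcls ℝ M F := by
    rw [hm, lin_repr hfin hloop hr hi mc]
    congr 1
    · congr 1
      rw [haZ]
      push_cast
      rfl
    · exact Finset.sum_congr rfl fun F _ => by rw [hbR F]
  set T : Finset (FlatIdx M) := (R2 M).filter (fun F => bZ F ≠ 0) with hT
  set e : {x // x ∈ T} ≃ Fin T.card := Fintype.equivFinOfCardEq (Fintype.card_coe T) with he
  refine ⟨aZ, T.card, fun t => bZ (e.symm t).1, fun t => (e.symm t).1, haZpos, ?_, ?_, ?_, ?_⟩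
  · intro t
    have hmem : (e.symm t).1 ∈ (R2 M).filter (fun F => bZ F ≠ 0) := (e.symm t).2
    rw [Finset.mem_filter] at hmem
    exact lt_of_le_of_ne (hbnonneg _ hmem.1) (Ne.symm hmem.2)
  · intro s t h
    exact e.symm.injective (Subtype.ext h)
  · intro t
    have hmem : (e.symm t).1 ∈ (R2 M).filter (fun F => bZ F ≠ 0) := (e.symm t).2
    rw [Finset.mem_filter] at hmem
    exact (Finset.mem_filter.1 hmem.1).2
  · rw [hrepr]
    congr 1
    have h1 : ∑ t : Fin T.card, (bZ (e.symm t).1 : ℝ) • xcls ℝ M (e.symm t).1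
        = ∑ x : {x // x ∈ T}, (bZ x.1 : ℝ) • xcls ℝ M x.1 :=
      Equiv.sum_comp e.symm (fun x => (bZ x.1 : ℝ) • xcls ℝ M x.1)
    rw [h1, Finset.sum_coe_sort T (fun F => (bZ F : ℝ) • xcls ℝ M F)]
    refine (Finset.sum_subset (Finset.filter_subset _ _) ?_).symm
    intro F hF hFT
    have : bZ F = 0 := by
      by_contra hne0
      exact hFT (Finset.mem_filter.2 ⟨hF, hne0⟩)
    rw [this, Int.cast_zero, zero_smul]


end ChowPaper
end

section
/- Let M be a loopless matroid of rank r on a finite ground set E and let ℓ_1, …, ℓ_k ∈ A^1(M)_ℝ be combinatorially nef classes. Then there exist nonnegative real numbers c_𝓕, indexed by flags 𝓕 : G_1 ⊊ G_2 ⊊ ⋯ ⊊ G_k of k nonempty proper flats of M, such that ℓ_1⋯ℓ_k = ∑_𝓕 c_𝓕 · x_{G_1}⋯x_{G_k} in A^k(M)_ℝ. -/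
open scoped Classical
open MvPolynomial

namespace ChowPaper

variable {α : Type*}

variable (R : Type*) [CommRing R]

set_option synthInstance.maxHeartbeats 1000000
set_option linter.unusedSectionVars false

section Aux

lemma flatIdx_finite (M : Matroid α) (hfin : M.E.Finite) : Finite (FlatIdx M) := by
  have h : {F : Set α | PFlat M F} ⊆ {F : Set α | F ⊆ M.E} := fun F hF => hF.1.subset_ground
  exact ((Set.Finite.finite_subsets hfin).subset h).to_subtype

lemma cmk_C_mul (M : Matroid α) (a : ℝ) (p : Pre ℝ M) :
    cmk ℝ M (MvPolynomial.C a * p) = a • cmk ℝ M p := by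
  rw [← MvPolynomial.smul_eq_C_mul]; rfl

/-- Being a nonnegative combination of flag monomials of length `k`. -/
def Good (M : Matroid α) (k : ℕ) (z : Chow ℝ M) : Prop :=
  ∃ c : Finset (FlatIdx M) → ℝ, (∀ S, 0 ≤ c S) ∧
    z = ∑ᶠ S : Finset (FlatIdx M),
      if IsFlagIdx M S ∧ S.card = k then c S • cmk ℝ M (∏ F ∈ S, X F) else 0

variable (M : Matroid α) [Fintype (FlatIdx M)]

lemma good_zero (k : ℕ) : Good M k 0 := by
  refine ⟨0, fun S => le_refl 0, ?_⟩
  rw [finsum_eq_sum_of_fintype]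
  simp

lemma good_add {k : ℕ} {z₁ z₂ : Chow ℝ M} (h₁ : Good M k z₁) (h₂ : Good M k z₂) :
    Good M k (z₁ + z₂) := by
  obtain ⟨c₁, hc₁, he₁⟩ := h₁
  obtain ⟨c₂, hc₂, he₂⟩ := h₂
  refine ⟨c₁ + c₂, fun S => add_nonneg (hc₁ S) (hc₂ S), ?_⟩
  rw [he₁, he₂, finsum_eq_sum_of_fintype, finsum_eq_sum_of_fintype, finsum_eq_sum_of_fintype,
    ← Finset.sum_add_distrib]
  refine Finset.sum_congr rfl fun S _ => ?_
  split_ifs with h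
  · rw [Pi.add_apply, add_smul]
  · rw [add_zero]

lemma good_sum {k : ℕ} {ι : Type*} (s : Finset ι) (f : ι → Chow ℝ M)
    (h : ∀ i ∈ s, Good M k (f i)) : Good M k (∑ i ∈ s, f i) :=
  Finset.sum_induction f (Good M k) (fun _ _ ha hb => good_add M ha hb) (good_zero M k) h

lemma good_smul {k : ℕ} {z : Chow ℝ M} {a : ℝ} (ha : 0 ≤ a) (h : Good M k z) :
    Good M k (a • z) := by
  obtain ⟨c, hc, he⟩ := h
  refine ⟨fun S => a * c S, fun S => mul_nonneg ha (hc S), ?_⟩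
  rw [he, finsum_eq_sum_of_fintype, finsum_eq_sum_of_fintype, Finset.smul_sum]
  refine Finset.sum_congr rfl fun S _ => ?_
  split_ifs with h
  · rw [smul_smul]
  · rw [smul_zero]

lemma good_single {k : ℕ} (S : Finset (FlatIdx M)) (hS : IsFlagIdx M S) (hcard : S.card = k)
    {a : ℝ} (ha : 0 ≤ a) : Good M k (a • cmk ℝ M (∏ F ∈ S, X F)) := by
  refine ⟨fun T => if T = S then a else 0, fun T => ?_, ?_⟩
  · dsimp only
    split_ifs
    · exact ha
    · exact le_refl 0
  · rw [finsum_eq_sum_of_fintype]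
    rw [Finset.sum_eq_single S]
    · simp [hS, hcard]
    · intro T _ hT
      simp [hT]
    · intro h
      exact absurd (Finset.mem_univ S) h

lemma lin_eq_sum (c : FlatIdx M → ℝ) :
    lin ℝ M c = ∑ F : FlatIdx M, c F • xcls ℝ M F := by
  rw [lin, finsum_eq_sum_of_fintype, map_sum]
  exact Finset.sum_congr rfl fun F _ => cmk_C_mul M (c F) (X F)

lemma xcls_mul_eq_zero {F G : FlatIdx M} (h₁ : ¬ F.1 ⊆ G.1) (h₂ : ¬ G.1 ⊆ F.1) :
    cmk ℝ M (X F * X G) = 0 :=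
  Ideal.Quotient.eq_zero_iff_mem.mpr (Ideal.subset_span (Or.inl ⟨F, G, h₁, h₂, rfl⟩))

lemma good_mul_mono {ℓ : Chow ℝ M} (hℓ : CombNef M ℓ) (k : ℕ) (S : Finset (FlatIdx M))
    (hS : IsFlagIdx M S) (hcard : S.card = k) :
    Good M (k + 1) (ℓ * cmk ℝ M (∏ F ∈ S, X F)) := by
  obtain ⟨c, hrep, hzero, hpos⟩ := hℓ S hS
  rw [hrep, lin_eq_sum, Finset.sum_mul]
  refine good_sum M _ _ fun F _ => ?_
  rw [smul_mul_assoc]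
  by_cases hFS : F ∈ S
  · rw [hzero F hFS, zero_smul]; exact good_zero M _
  by_cases hcomp : ∀ G ∈ S, F.1 ⊆ G.1 ∨ G.1 ⊆ F.1
  · have hmono : xcls ℝ M F * cmk ℝ M (∏ G ∈ S, X G) = cmk ℝ M (∏ G ∈ insert F S, X G) := by
      rw [Finset.prod_insert hFS, map_mul]; rfl
    rw [hmono]
    refine good_single M _ ?_ ?_ (hpos F hFS hcomp)
    · intro A hA B hB
      rcases Finset.mem_insert.mp hA with hA' | hA'
      · rcases Finset.mem_insert.mp hB with hB' | hB'
        · rw [hA', hB']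
          exact Or.inl subset_rfl
        · rw [hA']
          exact hcomp B hB'
      · rcases Finset.mem_insert.mp hB with hB' | hB'
        · rw [hB']
          exact (hcomp A hA').symm
        · exact hS A hA' B hB'
    · rw [Finset.card_insert_of_notMem hFS, hcard]
  · push_neg at hcomp
    obtain ⟨G, hG, hnc₁, hnc₂⟩ := hcomp
    have key : xcls ℝ M F * cmk ℝ M (∏ H ∈ S, X H) = 0 := by
      rw [xcls, ← map_mul, ← Finset.mul_prod_erase S _ hG, ← mul_assoc, map_mul,
        xcls_mul_eq_zero M hnc₁ hnc₂, zero_mul]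
    rw [key, smul_zero]
    exact good_zero M _

lemma good_mul {ℓ z : Chow ℝ M} {k : ℕ} (hℓ : CombNef M ℓ) (hz : Good M k z) :
    Good M (k + 1) (ℓ * z) := by
  obtain ⟨c, hc, he⟩ := hz
  rw [he, finsum_eq_sum_of_fintype, Finset.mul_sum]
  refine good_sum M _ _ fun S _ => ?_
  by_cases hP : IsFlagIdx M S ∧ S.card = k
  · rw [if_pos hP, mul_smul_comm]
    exact good_smul M (hc S) (good_mul_mono M hℓ k S hP.1 hP.2)
  · rw [if_neg hP, mul_zero]
    exact good_zero M _

lemma good_prod : ∀ (k : ℕ) (L : Fin k → Chow ℝ M), (∀ t, CombNef M (L t)) →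
    Good M k (∏ t, L t) := by
  intro k
  induction k with
  | zero =>
    intro L _
    have h := good_single M (k := 0) ∅ (fun F hF => absurd hF (Finset.notMem_empty F))
      Finset.card_empty zero_le_one
    simpa using h
  | succ k ih =>
    intro L hL
    rw [Fin.prod_univ_succ]
    exact good_mul M (hL 0) (ih (fun i => L i.succ) (fun i => hL i.succ))

end Aux

/-- A product of combinatorially nef classes is a nonnegative linear combination of flag
monomials `x_{G₁}⋯x_{G_k}`. -/
theorem stmt12 (M : Matroid α) (hfin : M.E.Finite) (hloop : Loopless M)
    (r : ℕ) (hr : rkN M M.E = r)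
    (k : ℕ) (L : Fin k → Chow ℝ M) (hL : ∀ t, CombNef M (L t)) :
    ∃ c : Finset (FlatIdx M) → ℝ, (∀ S, 0 ≤ c S) ∧
      ∏ t, L t = ∑ᶠ S : Finset (FlatIdx M),
        if IsFlagIdx M S ∧ S.card = k then c S • cmk ℝ M (∏ F ∈ S, X F) else 0 := by
  have : Finite (FlatIdx M) := flatIdx_finite M hfin
  have : Fintype (FlatIdx M) := Fintype.ofFinite _
  exact good_prod M k L hL

end ChowPaper
end
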